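/- arXiv:2208.11364 — 5 statements merged into one kernel-verified Lean document; each statement's English description precedes it below -/
import Mathlib

section
/- (Lemma 4: local covering of reachable sets by perturbed reachable sets) Assume Σ : ẋ ∈ F(x) is forward complete and F is continuous with nonempty compact convex values. Then for each x ∈ E and each continuous ε : E → ℝ with ε(y) > 0 for all y, there exists T > 0 such that for each t ∈ (0,T] there exists δ > 0 with the following property: whenever φ is a solution of Σ on [0,t] with φ(0) = x and y := φ(t) ≠ x, then (i) for every z ∈ Metric.closedBall y δ there is a solution ψ of Σ_ε on [0,t] with ψ(0) = x and ψ(t) = z, and (ii) for every z ∈ Metric.closedBall x δ there is a solution ψ of Σ_ε on [0,t] with ψ(0) = z and ψ(t) = y. -/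
open MeasureTheory Set Pointwise Topology

noncomputable section

/-- Euclidean state space. -/
abbrev Euc (n : ℕ) := EuclideanSpace ℝ (Fin n)

/-- `φ` is a solution of the perturbed differential inclusion
`ẋ ∈ F(x) + ε(x)·𝔹` on the interval `I ⊆ ℝ`. -/
def IsSolution {n : ℕ} (F : Euc n → Set (Euc n)) (ε : Euc n → ℝ) (I : Set ℝ)
    (φ : ℝ → Euc n) : Prop :=
  ∃ g : ℝ → Euc n, LocallyIntegrable g volume ∧
    (∀ t₀ ∈ I, ∀ t ∈ I, φ t = φ t₀ + ∫ s in t₀..t, g s) ∧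
    (∀ᵐ s ∂volume, s ∈ I → g s ∈ F (φ s) + Metric.closedBall (0 : Euc n) (ε (φ s)))

/-- `F` is upper semicontinuous (as a set-valued map). -/
def USC {n : ℕ} (F : Euc n → Set (Euc n)) : Prop :=
  ∀ x : Euc n, ∀ r > (0:ℝ), ∃ δ > (0:ℝ), ∀ y : Euc n, ‖y - x‖ < δ →
    F y ⊆ {z | ∃ w ∈ F x, ‖z - w‖ ≤ r}

/-- `F` is lower semicontinuous (as a set-valued map). -/
def LSC {n : ℕ} (F : Euc n → Set (Euc n)) : Prop :=
  ∀ x : Euc n, ∀ v ∈ F x, ∀ r > (0:ℝ), ∃ δ > (0:ℝ), ∀ y : Euc n, ‖y - x‖ < δ →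
    ∃ w ∈ F y, ‖w - v‖ ≤ r

/-- `F` has nonempty, compact and convex values. -/
def NCCValues {n : ℕ} (F : Euc n → Set (Euc n)) : Prop :=
  ∀ x, (F x).Nonempty ∧ IsCompact (F x) ∧ Convex ℝ (F x)

/-- The inclusion `ẋ ∈ F(x)` is forward complete: solutions on compact intervals
extend to arbitrarily larger compact intervals. -/
def ForwardComplete {n : ℕ} (F : Euc n → Set (Euc n)) : Prop :=
  ∀ (a b : ℝ) (φ : ℝ → Euc n), IsSolution F (fun _ => 0) (Icc a b) φ →
    ∀ b' ≥ b, ∃ ψ : ℝ → Euc n, IsSolution F (fun _ => 0) (Icc a b') ψ ∧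
      ∀ t ∈ Icc a b, ψ t = φ t

/-- `Σ_ε` is safe with respect to `(Xo, Xu)`. -/
def SafeWrt {n : ℕ} (F : Euc n → Set (Euc n)) (ε : Euc n → ℝ)
    (Xo Xu : Set (Euc n)) : Prop :=
  ∀ (a b : ℝ) (φ : ℝ → Euc n), a ≤ 0 → 0 ≤ b →
    IsSolution F ε (Icc a b) φ → φ 0 ∈ Xo → ∀ t ∈ Icc a b, φ t ∉ Xu

/-- `Σ` is robustly safe with respect to `(Xo, Xu)`. -/
def RobustlySafe {n : ℕ} (F : Euc n → Set (Euc n)) (Xo Xu : Set (Euc n)) : Prop :=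
  ∃ ε : Euc n → ℝ, Continuous ε ∧ (∀ x, 0 < ε x) ∧ SafeWrt F ε Xo Xu

/-- The reachable set of `Σ_ε` from `Xo`. -/
def Reach {n : ℕ} (F : Euc n → Set (Euc n)) (ε : Euc n → ℝ) (Xo : Set (Euc n)) :
    Set (Euc n) :=
  {y | ∃ t ≥ (0:ℝ), ∃ φ : ℝ → Euc n, IsSolution F ε (Icc 0 t) φ ∧ φ 0 ∈ Xo ∧ φ t = y}

/-- `φ` (with domain `I`) is a forward-maximal solution of `Σ_ε`. -/
def IsForwardMaximal {n : ℕ} (F : Euc n → Set (Euc n)) (ε : Euc n → ℝ)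
    (φ : ℝ → Euc n) (I : Set ℝ) : Prop :=
  (I = Ici (0:ℝ) ∧ IsSolution F ε I φ) ∨
  (∃ T : ℝ, 0 < T ∧ I = Ico 0 T ∧ IsSolution F ε I φ ∧
    ¬ ∃ ψ : ℝ → Euc n, IsSolution F ε (Icc 0 T) ψ ∧ ∀ t ∈ Ico 0 T, ψ t = φ t)

/-- `K` is locally recurrent for `Σ_ε` on `U₁`. -/
def LocallyRecurrent {n : ℕ} (F : Euc n → Set (Euc n)) (ε : Euc n → ℝ)
    (K U₁ : Set (Euc n)) : Prop :=
  ∀ (φ : ℝ → Euc n) (I : Set ℝ), IsForwardMaximal F ε φ I → φ 0 ∈ U₁ →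
    ∃ t ∈ I, φ t ∈ interior K

/-- `K` is forward contractive for `Σ_ε`. -/
def ForwardContractive {n : ℕ} (F : Euc n → Set (Euc n)) (ε : Euc n → ℝ)
    (K : Set (Euc n)) : Prop :=
  (∀ (T : ℝ) (φ : ℝ → Euc n), IsSolution F ε (Icc 0 T) φ → φ 0 ∈ K →
    ∀ t ∈ Icc 0 T, φ t ∈ K) ∧
  (∀ x₀ ∈ frontier K, ∀ T : ℝ, 0 < T → ∀ φ : ℝ → Euc n,
    IsSolution F ε (Icc 0 T) φ → φ 0 = x₀ →
    ∃ T' ∈ Ioc (0:ℝ) T, ∀ t ∈ Ioc (0:ℝ) T', φ t ∈ interior K)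

/-- Assumption (A6) for a closed set `K` with closed neighborhood set `U₁`. -/
def AssumptionA6 {n : ℕ} (F : Euc n → Set (Euc n)) (K U₁ : Set (Euc n)) : Prop :=
  IsClosed U₁ ∧ frontier K ⊆ interior U₁ ∧
  LocallyRecurrent F (fun _ => 0) K U₁ ∧
  LocallyRecurrent (fun x => -F x) (fun _ => 0) Kᶜ U₁ ∧
  ForwardContractive F (fun _ => 0) K ∧
  ForwardContractive (fun x => -F x) (fun _ => 0) (interior K)ᶜ

/-- positive lower bound for finitely many positive reals -/
lemma finite_min_pos {α : Type*} {s : Set α} (hs : s.Finite) (f : α → ℝ)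
    (hf : ∀ a ∈ s, 0 < f a) : ∃ d > 0, ∀ a ∈ s, d ≤ f a := by
  classical
  rcases s.eq_empty_or_nonempty with h | h
  · exact ⟨1, one_pos, by simp [h]⟩
  · have hne : hs.toFinset.Nonempty := by
      simpa [Set.Finite.toFinset_nonempty] using h
    refine ⟨hs.toFinset.inf' hne f, ?_, ?_⟩
    · obtain ⟨a, ha, hval⟩ := hs.toFinset.exists_mem_eq_inf' hne f
      rw [hval]; exact hf a (hs.mem_toFinset.mp ha)
    · intro a ha
      exact Finset.inf'_le f (hs.mem_toFinset.mpr ha)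

/-- F is bounded on a compact set. -/
lemma exists_bound {n : ℕ} (F : Euc n → Set (Euc n)) (hUSC : USC F) (hVal : NCCValues F)
    {K : Set (Euc n)} (hK : IsCompact K) :
    ∃ M : ℝ, 0 ≤ M ∧ ∀ p ∈ K, ∀ v ∈ F p, ‖v‖ ≤ M := by
  classical
  choose M0 hM0 using fun p : Euc n => ((hVal p).2.1.isBounded).exists_norm_le
  choose σ hσpos hσ using fun p : Euc n => hUSC p 1 one_pos
  have hcov : K ⊆ ⋃ p ∈ K, Metric.ball p (σ p) := fun p hp => by
    exact Set.mem_biUnion hp (Metric.mem_ball_self (hσpos p))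
  obtain ⟨b, hbK, hbfin, hbcov⟩ :=
    hK.elim_finite_subcover_image (fun p _ => Metric.isOpen_ball) hcov
  obtain ⟨M, hM⟩ := (hbfin.image (fun p => M0 p + 1)).bddAbove
  refine ⟨max M 0, le_max_right _ _, ?_⟩
  intro p hp v hv
  obtain ⟨q, hq, hpq⟩ := Set.mem_iUnion₂.mp (hbcov hp)
  have hdist : ‖p - q‖ < σ q := by
    rw [← dist_eq_norm]; exact Metric.mem_ball.mp hpq
  obtain ⟨w, hw, hwv⟩ := hσ q p hdist hv
  have : ‖v‖ ≤ M0 q + 1 := by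
    calc ‖v‖ ≤ ‖w‖ + ‖v - w‖ := by
          have := norm_add_le w (v - w); simpa using this
      _ ≤ M0 q + 1 := add_le_add (hM0 q w hw) hwv
  have hMq : M0 q + 1 ≤ M := hM (Set.mem_image_of_mem _ hq)
  exact this.trans (hMq.trans (le_max_left _ _))

/-- uniform LSC modulus on a compact set -/
lemma unif_lsc {n : ℕ} (F : Euc n → Set (Euc n)) (hUSC : USC F) (hLSC : LSC F)
    (hVal : NCCValues F) {K : Set (Euc n)} (hK : IsCompact K) {r : ℝ} (hr : 0 < r) :
    ∃ η > 0, ∀ p ∈ K, ∀ q : Euc n, ‖q - p‖ ≤ η → ∀ v ∈ F p, ∃ w ∈ F q, ‖w - v‖ ≤ r := by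
  classical
  -- pointwise key: near p, every element of F p is r/2-close to F q
  have key : ∀ p : Euc n, ∃ d > 0, ∀ q : Euc n, ‖q - p‖ < d →
      ∀ v' ∈ F p, ∃ w ∈ F q, ‖w - v'‖ ≤ r / 2 := by
    intro p
    have hδ : ∀ v : Euc n, ∃ d > 0, v ∈ F p → ∀ y : Euc n, ‖y - p‖ < d →
        ∃ w ∈ F y, ‖w - v‖ ≤ r / 4 := by
      intro v
      by_cases hv : v ∈ F p
      · obtain ⟨d, hd, h⟩ := hLSC p v hv (r/4) (by linarith)
        exact ⟨d, hd, fun _ => h⟩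
      · exact ⟨1, one_pos, fun h => absurd h hv⟩
    choose δv hδvpos hδv using hδ
    have hcovF : F p ⊆ ⋃ v ∈ F p, Metric.ball v (r/4) := fun v hv =>
      Set.mem_biUnion hv (Metric.mem_ball_self (by linarith))
    obtain ⟨b, hbF, hbfin, hbcov⟩ :=
      (hVal p).2.1.elim_finite_subcover_image (fun v _ => Metric.isOpen_ball) hcovF
    obtain ⟨d, hd, hdle⟩ := finite_min_pos hbfin δv (fun v _ => hδvpos v)
    refine ⟨d, hd, fun q hq v' hv' => ?_⟩
    obtain ⟨v, hv, hv'v⟩ := Set.mem_iUnion₂.mp (hbcov hv')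
    have hvF : v ∈ F p := hbF hv
    obtain ⟨w, hw, hwv⟩ := hδv v hvF q (lt_of_lt_of_le hq (hdle v hv))
    refine ⟨w, hw, ?_⟩
    have h1 : ‖v' - v‖ < r/4 := by rw [← dist_eq_norm]; exact hv'v
    calc ‖w - v'‖ ≤ ‖w - v‖ + ‖v - v'‖ := by
          have := norm_add_le (w - v) (v - v'); simpa using this
      _ ≤ r/4 + r/4 := add_le_add hwv (by rw [norm_sub_rev]; linarith)
      _ = r/2 := by ring
  choose d hdpos hd using key
  choose σ hσpos hσ using fun p : Euc n => hUSC p (r/4) (by linarith)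
  set ρ : Euc n → ℝ := fun p => min (σ p) (d p) / 3 with hρdef
  have hρpos : ∀ p, 0 < ρ p := fun p => by
    have := lt_min (hσpos p) (hdpos p); positivity
  have hcov : K ⊆ ⋃ p ∈ K, Metric.ball p (ρ p) := fun p hp =>
    Set.mem_biUnion hp (Metric.mem_ball_self (hρpos p))
  obtain ⟨b, hbK, hbfin, hbcov⟩ :=
    hK.elim_finite_subcover_image (fun p _ => Metric.isOpen_ball) hcov
  obtain ⟨η, hη, hηle⟩ := finite_min_pos hbfin ρ (fun p _ => hρpos p)
  refine ⟨η, hη, fun p hp q hq v hv => ?_⟩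
  obtain ⟨i, hi, hpi⟩ := Set.mem_iUnion₂.mp (hbcov hp)
  have hpi' : ‖p - i‖ < ρ i := by rw [← dist_eq_norm]; exact hpi
  have hρσ : ρ i ≤ σ i := by
    have h1 := min_le_left (σ i) (d i)
    have h2 := hσpos i
    simp only [hρdef]; linarith
  have hσi : ‖p - i‖ < σ i := lt_of_lt_of_le hpi' hρσ
  obtain ⟨v', hv', hvv'⟩ := hσ i p hσi hv
  have hqi : ‖q - i‖ < d i := by
    have h1 : ‖q - i‖ ≤ ‖q - p‖ + ‖p - i‖ := by
      have := norm_add_le (q - p) (p - i); simpa using this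
    have h2 : η ≤ ρ i := hηle i hi
    have h3 : 3 * ρ i ≤ d i := by
      have := min_le_right (σ i) (d i)
      simp only [hρdef]; linarith
    nlinarith [hρpos i]
  obtain ⟨w, hw, hwv'⟩ := hd i q hqi v' hv'
  refine ⟨w, hw, ?_⟩
  calc ‖w - v‖ ≤ ‖w - v'‖ + ‖v' - v‖ := by
        have := norm_add_le (w - v') (v' - v); simpa using this
    _ ≤ r/2 + r/4 := add_le_add hwv' (by rw [norm_sub_rev]; exact hvv')
    _ ≤ r := by linarith

set_option maxHeartbeats 1000000 in
/-- Lemma 4: local covering of reachable sets by perturbed reachable sets. -/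
theorem lemma4_local_covering {n : ℕ} (hn : 1 ≤ n)
    (F : Euc n → Set (Euc n))
    (hFC : ForwardComplete F) (hUSC : USC F) (hLSC : LSC F) (hVal : NCCValues F) :
    ∀ (x : Euc n) (ε : Euc n → ℝ), Continuous ε → (∀ y, 0 < ε y) →
      ∃ T > (0:ℝ), ∀ t ∈ Ioc (0:ℝ) T, ∃ δ > (0:ℝ),
        ∀ φ : ℝ → Euc n, IsSolution F (fun _ => 0) (Icc 0 t) φ → φ 0 = x →
          φ t ≠ x →
          (∀ z ∈ Metric.closedBall (φ t) δ,
            ∃ ψ : ℝ → Euc n, IsSolution F ε (Icc 0 t) ψ ∧ ψ 0 = x ∧ ψ t = z) ∧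
          (∀ z ∈ Metric.closedBall x δ,
            ∃ ψ : ℝ → Euc n, IsSolution F ε (Icc 0 t) ψ ∧ ψ 0 = z ∧ ψ t = φ t) := by
  intro x ε hεc hεpos
  set K := Metric.closedBall x 1 with hKdef
  have hKc : IsCompact K := isCompact_closedBall x 1
  obtain ⟨p₀, hp₀K, hp₀⟩ := hKc.exists_isMinOn ⟨x, Metric.mem_closedBall_self zero_le_one⟩
    hεc.continuousOn
  set ε₀ := ε p₀ with hε₀def
  have hε₀pos : 0 < ε₀ := hεpos p₀
  have hε₀le : ∀ q ∈ K, ε₀ ≤ ε q := fun q hq => isMinOn_iff.mp hp₀ q hq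
  obtain ⟨M, hM0, hM⟩ := exists_bound F hUSC hVal hKc
  obtain ⟨η, hηpos, hη⟩ := unif_lsc F hUSC hLSC hVal hKc (r := ε₀/2) (by positivity)
  refine ⟨min 1 (1 / (4*(M+1))), lt_min one_pos (by positivity), ?_⟩
  intro t ht
  obtain ⟨ht0, htT⟩ := ht
  have htle1 : t ≤ 1 := htT.trans (min_le_left _ _)
  have hMt : M * t ≤ 1/4 := by
    have h1 : t ≤ 1/(4*(M+1)) := htT.trans (min_le_right _ _)
    have h2 : M * t ≤ M * (1/(4*(M+1))) := mul_le_mul_of_nonneg_left h1 hM0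
    have h3 : M * (1/(4*(M+1))) ≤ 1/4 := by
      rw [mul_one_div, div_le_div_iff₀ (by linarith) (by norm_num)]
      nlinarith
    linarith
  set δ := min (min η (1/4)) (t * ε₀ / 2) with hδdef
  have hδpos : 0 < δ := lt_min (lt_min hηpos (by norm_num)) (by positivity)
  refine ⟨δ, hδpos, ?_⟩
  intro φ hφ hφ0 _hne
  obtain ⟨g, hg, hint, hae⟩ := hφ
  have hae' : ∀ᵐ s ∂volume, s ∈ Icc (0:ℝ) t → g s ∈ F (φ s) := by
    filter_upwards [hae] with s hs hsI
    have h1 := hs hsI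
    simpa [Metric.closedBall_zero, Set.add_singleton] using h1
  have hgiv : ∀ a b : ℝ, IntervalIntegrable g volume a b := fun a b =>
    (hg.integrableOn_isCompact isCompact_uIcc).intervalIntegrable
  set h : ℝ → Euc n := fun s => x + ∫ u in (0:ℝ)..s, g u with hhdef
  have hC : Continuous h := continuous_const.add (intervalIntegral.continuous_primitive hgiv 0)
  have h0mem : (0:ℝ) ∈ Icc (0:ℝ) t := ⟨le_refl _, le_of_lt ht0⟩
  have hφeq : ∀ s ∈ Icc (0:ℝ) t, φ s = h s := by
    intro s hs
    have h1 := hint 0 h0mem s hs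
    rw [h1, hφ0]
  -- integral bound
  have hIB : ∀ s ∈ Icc (0:ℝ) t, (∀ u, 0 ≤ u → u < s → ‖h u - x‖ ≤ 1/2) →
      ‖h s - x‖ ≤ M * s := by
    intro s hs hsmall
    have hdiff : h s - x = ∫ u in Ioo (0:ℝ) s, g u := by
      rw [hhdef]
      simp only [add_sub_cancel_left]
      rw [intervalIntegral.integral_of_le hs.1, MeasureTheory.integral_Ioc_eq_integral_Ioo]
    have haeb : ∀ᵐ u ∂(volume.restrict (Ioo (0:ℝ) s)), ‖g u‖ ≤ M := by
      have h1 : ∀ᵐ u ∂(volume.restrict (Ioo (0:ℝ) s)), u ∈ Icc (0:ℝ) t → g u ∈ F (φ u) :=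
        ae_restrict_of_ae hae'
      have h2 : ∀ᵐ u ∂(volume.restrict (Ioo (0:ℝ) s)), u ∈ Ioo (0:ℝ) s :=
        ae_restrict_mem measurableSet_Ioo
      filter_upwards [h1, h2] with u hu1 hu2
      have huI : u ∈ Icc (0:ℝ) t := ⟨le_of_lt hu2.1, le_trans (le_of_lt hu2.2) hs.2⟩
      have hφu : φ u ∈ K := by
        rw [hφeq u huI, hKdef, Metric.mem_closedBall, dist_eq_norm]
        have := hsmall u (le_of_lt hu2.1) hu2.2
        linarith
      exact hM (φ u) hφu (g u) (hu1 huI)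
    have hb : ‖∫ u in Ioo (0:ℝ) s, g u‖ ≤ ∫ _ in Ioo (0:ℝ) s, M := by
      refine MeasureTheory.norm_integral_le_of_norm_le ?_ haeb
      exact integrableOn_const measure_Ioo_lt_top.ne
    have hc : (∫ _ in Ioo (0:ℝ) s, M) = M * s := by
      rw [MeasureTheory.setIntegral_const, Real.volume_real_Ioo_of_le hs.1, smul_eq_mul]
      ring
    rw [hdiff]
    rw [hc] at hb
    exact hb
  -- bootstrap
  have hbdd : ∀ s ∈ Icc (0:ℝ) t, ‖h s - x‖ ≤ 1/4 := by
    set S : Set ℝ := {s | s ∈ Icc (0:ℝ) t ∧ ∀ u, 0 ≤ u → u ≤ s → ‖h u - x‖ ≤ 1/2} with hSdef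
    have h0S : (0:ℝ) ∈ S := by
      refine ⟨h0mem, ?_⟩
      intro u hu0 hu
      have hu' : u = 0 := le_antisymm hu hu0
      subst hu'
      simp [hhdef, intervalIntegral.integral_same]
    have hSbdd : BddAbove S := ⟨t, fun s hs => hs.1.2⟩
    have hSne : S.Nonempty := ⟨0, h0S⟩
    set s' := sSup S with hs'def
    have hs'0 : 0 ≤ s' := le_csSup hSbdd h0S
    have hs't : s' ≤ t := csSup_le hSne (fun s hs => hs.1.2)
    have hlt : ∀ u, 0 ≤ u → u < s' → ‖h u - x‖ ≤ 1/2 := by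
      intro u hu0 hu
      obtain ⟨s, hsS, hus⟩ := exists_lt_of_lt_csSup hSne hu
      exact hsS.2 u hu0 (le_of_lt hus)
    have hs'half : ‖h s' - x‖ ≤ 1/2 := by
      rcases eq_or_lt_of_le hs'0 with h0 | h0
      · rw [← h0]
        exact h0S.2 0 le_rfl le_rfl
      · have hclosed : IsClosed {u : ℝ | ‖h u - x‖ ≤ 1/2} :=
          isClosed_le ((hC.sub continuous_const).norm) continuous_const
        have hsub : Ico (0:ℝ) s' ⊆ {u | ‖h u - x‖ ≤ 1/2} := fun u hu => hlt u hu.1 hu.2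
        have hmem : s' ∈ closure (Ico (0:ℝ) s') := by
          rw [closure_Ico (ne_of_lt h0)]
          exact ⟨hs'0, le_rfl⟩
        exact hclosed.closure_subset_iff.mpr hsub hmem
    have hs'S : s' ∈ S := by
      refine ⟨⟨hs'0, hs't⟩, fun u hu0 hus => ?_⟩
      rcases eq_or_lt_of_le hus with he | hl
      · rw [he]; exact hs'half
      · exact hlt u hu0 hl
    have hs'quarter : ‖h s' - x‖ ≤ 1/4 := by
      have h1 := hIB s' ⟨hs'0, hs't⟩ hlt
      have h2 : M * s' ≤ M * t := mul_le_mul_of_nonneg_left hs't hM0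
      linarith
    have hs'eq : s' = t := by
      by_contra hne'
      have hlt' : s' < t := lt_of_le_of_ne hs't hne'
      have hopen : IsOpen {u : ℝ | ‖h u - x‖ < 1/2} :=
        isOpen_lt ((hC.sub continuous_const).norm) continuous_const
      obtain ⟨σ, hσ0, hσb⟩ := Metric.isOpen_iff.mp hopen s'
        (by simp only [Set.mem_setOf_eq]; linarith)
      set s'' := min (s' + σ/2) t with hs''def
      have hs''gt : s' < s'' := lt_min (by linarith) hlt'
      have hs''S : s'' ∈ S := by
        refine ⟨⟨by linarith, min_le_right _ _⟩, ?_⟩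
        intro u hu0 hus''
        rcases le_or_gt u s' with h1 | h1
        · exact hs'S.2 u hu0 h1
        · have hub : u ∈ Metric.ball s' σ := by
            rw [Metric.mem_ball, Real.dist_eq, abs_of_pos (by linarith)]
            have h2 : u ≤ s' + σ/2 := le_trans hus'' (min_le_left _ _)
            linarith
          exact le_of_lt (hσb hub)
      have : s'' ≤ s' := le_csSup hSbdd hs''S
      linarith
    intro s hs
    have hall : ∀ u, 0 ≤ u → u < s → ‖h u - x‖ ≤ 1/2 := by
      intro u hu0 hu
      exact hs'S.2 u hu0 (by rw [hs'eq]; linarith [hs.2])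
    have h1 := hIB s hs hall
    have h2 : M * s ≤ M * t := mul_le_mul_of_nonneg_left hs.2 hM0
    linarith
  have hφK : ∀ s ∈ Icc (0:ℝ) t, φ s ∈ K ∧ ‖φ s - x‖ ≤ 1/4 := by
    intro s hs
    rw [hφeq s hs]
    exact ⟨Metric.mem_closedBall.mpr (by rw [dist_eq_norm]; linarith [hbdd s hs]), hbdd s hs⟩
  have hδη : δ ≤ η := le_trans (min_le_left _ _) (min_le_left _ _)
  have hδ4 : δ ≤ 1/4 := le_trans (min_le_left _ _) (min_le_right _ _)
  have hδε : δ ≤ t * ε₀ / 2 := min_le_right _ _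
  -- the builder
  have build : ∀ (v₀ : Euc n) (α β : ℝ), ‖v₀‖ ≤ δ → |β| * ‖v₀‖ ≤ ε₀/2 →
      (∀ s ∈ Icc (0:ℝ) t, |α + β * s| ≤ 1) →
      IsSolution F ε (Icc 0 t) (fun s => φ s + (α + β * s) • v₀) := by
    intro v₀ α β hv₀ hβv hαβ
    refine ⟨fun s => g s + β • v₀, hg.add (locallyIntegrable_const _), ?_, ?_⟩
    · intro t₀ ht₀ t' ht'
      simp only []
      rw [intervalIntegral.integral_add (hgiv _ _) intervalIntegrable_const,
        intervalIntegral.integral_const, hint t₀ ht₀ t' ht']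
      have hsm : (α + β * t') • v₀ = (α + β * t₀) • v₀ + (t' - t₀) • β • v₀ := by
        rw [smul_smul, ← add_smul]
        ring_nf
      rw [hsm]
      abel
    · filter_upwards [hae'] with s hs hsI
      have hgs : g s ∈ F (φ s) := hs hsI
      have hφsK := hφK s hsI
      have hqφ : ‖(φ s + (α + β * s) • v₀) - φ s‖ ≤ δ := by
        simp only [add_sub_cancel_left]
        rw [norm_smul, Real.norm_eq_abs]
        calc |α + β * s| * ‖v₀‖ ≤ 1 * ‖v₀‖ :=
              mul_le_mul_of_nonneg_right (hαβ s hsI) (norm_nonneg _)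
          _ = ‖v₀‖ := one_mul _
          _ ≤ δ := hv₀
      have hqK : (φ s + (α + β * s) • v₀) ∈ K := by
        rw [hKdef, Metric.mem_closedBall, dist_eq_norm]
        have h1 : ‖(φ s + (α + β * s) • v₀) - x‖ ≤
            ‖(φ s + (α + β * s) • v₀) - φ s‖ + ‖φ s - x‖ := by
          have heq : (φ s + (α + β * s) • v₀) - x =
              ((φ s + (α + β * s) • v₀) - φ s) + (φ s - x) := by abel
          rw [heq]; exact norm_add_le _ _
        linarith [hφsK.2]
      obtain ⟨w, hw, hwg⟩ := hη (φ s) hφsK.1 (φ s + (α + β * s) • v₀)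
        (le_trans hqφ hδη) (g s) hgs
      refine Set.mem_add.mpr ⟨w, hw, g s + β • v₀ - w, ?_, by abel⟩
      rw [Metric.mem_closedBall, dist_zero_right]
      have h1 : ‖g s + β • v₀ - w‖ ≤ ‖g s - w‖ + ‖β • v₀‖ := by
        have := norm_add_le (g s - w) (β • v₀)
        have heq : g s - w + β • v₀ = g s + β • v₀ - w := by abel
        rw [heq] at this
        exact this
      rw [norm_smul, Real.norm_eq_abs] at h1
      have h2 : ε₀ ≤ ε (φ s + (α + β * s) • v₀) := hε₀le _ hqK
      have h3 : ‖g s - w‖ ≤ ε₀/2 := by rw [norm_sub_rev]; exact hwg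
      linarith
  constructor
  · -- (i)
    intro z hz
    have hzy : ‖z - φ t‖ ≤ δ := by
      rw [← dist_eq_norm]; exact Metric.mem_closedBall.mp hz
    have hβv : |1/t| * ‖z - φ t‖ ≤ ε₀/2 := by
      rw [abs_of_pos (by positivity)]
      have h1 : 1/t * ‖z - φ t‖ ≤ 1/t * δ :=
        mul_le_mul_of_nonneg_left hzy (by positivity)
      have h2 : 1/t * δ ≤ ε₀/2 := by
        rw [one_div, inv_mul_le_iff₀ ht0]
        linarith
      linarith
    have hαβ : ∀ s ∈ Icc (0:ℝ) t, |0 + (1/t) * s| ≤ 1 := by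
      intro s hs
      rw [zero_add, abs_of_nonneg (mul_nonneg (by positivity) hs.1)]
      rw [one_div, inv_mul_le_iff₀ ht0]
      linarith [hs.2]
    refine ⟨fun s => φ s + ((0:ℝ) + (1/t) * s) • (z - φ t),
      build (z - φ t) 0 (1/t) hzy hβv hαβ, ?_, ?_⟩
    · simp [hφ0]
    · have h1 : (0:ℝ) + (1/t) * t = 1 := by field_simp; norm_num
      simp only [h1, one_smul]
      abel
  · -- (ii)
    intro z hz
    have hzx : ‖z - x‖ ≤ δ := by
      rw [← dist_eq_norm]; exact Metric.mem_closedBall.mp hz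
    have hβv : |-(1/t)| * ‖z - x‖ ≤ ε₀/2 := by
      rw [abs_neg, abs_of_pos (by positivity)]
      have h1 : 1/t * ‖z - x‖ ≤ 1/t * δ :=
        mul_le_mul_of_nonneg_left hzx (by positivity)
      have h2 : 1/t * δ ≤ ε₀/2 := by
        rw [one_div, inv_mul_le_iff₀ ht0]
        linarith
      linarith
    have hαβ : ∀ s ∈ Icc (0:ℝ) t, |1 + (-(1/t)) * s| ≤ 1 := by
      intro s hs
      rw [abs_le]
      have h1 : 1/t * s ≤ 1 := by
        rw [one_div, inv_mul_le_iff₀ ht0]; linarith [hs.2]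
      have h2 : 0 ≤ 1/t * s := mul_nonneg (by positivity) hs.1
      constructor <;> nlinarith
    refine ⟨fun s => φ s + ((1:ℝ) + (-(1/t)) * s) • (z - x),
      build (z - x) 1 (-(1/t)) hzx hβv hαβ, ?_, ?_⟩
    · simp [hφ0]
    · show φ t + ((1:ℝ) + (-(1/t)) * t) • (z - x) = φ t
      have h1 : (1:ℝ) + (-(1/t)) * t = 0 := by field_simp; norm_num
      rw [h1, zero_smul, add_zero]
end
end

section
/- (Lemma 7: integral smoothing produces a C¹ function) Let B_o : E → ℝ be Borel measurable and bounded on bounded sets (as is the case for an upper or lower semicontinuous function that is locally bounded), let ρ_o : E → ℝ be smooth with ρ_o(x) > 0 for all x, and let Ψ : E → ℝ be smooth with 0 ≤ Ψ(v) ≤ 1 for all v, Ψ(v) = 0 for every v outside the closed unit ball of E, and ∫ Ψ dv = 1. Then the function B : E → ℝ defined by B(x) := ∫_{v ∈ E} B_o(x + ρ_o(x) • v) · Ψ(v) dv is continuously differentiable (ContDiff ℝ 1 B). -/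
open MeasureTheory Set Pointwise Topology

noncomputable section

set_option maxHeartbeats 2000000 in
/-- Lemma 7: integral smoothing produces a C¹ function. -/
theorem lemma7_integral_smoothing {n : ℕ} (hn : 1 ≤ n)
    (Bo : Euc n → ℝ) (hBo : Measurable Bo)
    (hBobdd : ∀ s : Set (Euc n), Bornology.IsBounded s → ∃ C : ℝ, ∀ x ∈ s, |Bo x| ≤ C)
    (ρo : Euc n → ℝ) (hρo : ContDiff ℝ (⊤ : ℕ∞) ρo) (hρopos : ∀ x, 0 < ρo x)
    (Ψ : Euc n → ℝ) (hΨ : ContDiff ℝ (⊤ : ℕ∞) Ψ)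
    (hΨ01 : ∀ v, 0 ≤ Ψ v ∧ Ψ v ≤ 1)
    (hΨ0 : ∀ v : Euc n, v ∉ Metric.closedBall (0 : Euc n) 1 → Ψ v = 0)
    (hΨint : (∫ v : Euc n, Ψ v) = 1) :
    ContDiff ℝ 1 (fun x : Euc n => ∫ v : Euc n, Bo (x + ρo x • v) * Ψ v) := by
  
  classical
  have hρne : ∀ x, ρo x ≠ 0 := fun x => (hρopos x).ne'
  set ψ : Euc n × Euc n → ℝ := fun p => Ψ ((ρo p.1)⁻¹ • (p.2 - p.1)) with hψdef
  have hψsmooth : ContDiff ℝ (⊤ : ℕ∞) ψ := by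
    apply hΨ.comp
    exact ((hρo.comp contDiff_fst).inv fun p => hρne p.1).smul
      (contDiff_snd.sub contDiff_fst)
  have hψcont : Continuous ψ := hψsmooth.continuous
  have hψle : ∀ p, |ψ p| ≤ 1 := by
    intro p
    rw [abs_le]
    exact ⟨by linarith [(hΨ01 ((ρo p.1)⁻¹ • (p.2 - p.1))).1], (hΨ01 _).2⟩
  set D : Euc n × Euc n → (Euc n →L[ℝ] ℝ) :=
    fun p => (fderiv ℝ ψ p).comp (ContinuousLinearMap.inl ℝ (Euc n) (Euc n)) with hDdef
  have hDcont : Continuous D :=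
    (hψsmooth.continuous_fderiv (by simp)).clm_comp continuous_const
  have hpart : ∀ (x w : Euc n), HasFDerivAt (fun y => ψ (y, w)) (D (x, w)) x := by
    intro x w
    exact ((hψsmooth.differentiable (by simp) (x, w)).hasFDerivAt).comp x
      (hasFDerivAt_prodMk_left (𝕜 := ℝ) x w)
  have hψzero : ∀ x w : Euc n, ρo x < ‖w - x‖ → ψ (x, w) = 0 := by
    intro x w h
    apply hΨ0
    intro hmem
    rw [Metric.mem_closedBall, dist_zero_right] at hmem
    have h1 : ‖(ρo x)⁻¹ • (w - x)‖ = (ρo x)⁻¹ * ‖w - x‖ := by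
      rw [norm_smul, Real.norm_eq_abs, abs_of_pos (inv_pos.2 (hρopos x))]
    rw [h1, ← div_eq_inv_mul] at hmem
    have h2 := (one_lt_div (hρopos x)).2 h
    linarith
  have hopen : IsOpen {p : Euc n × Euc n | ρo p.1 < ‖p.2 - p.1‖} :=
    isOpen_lt (hρo.continuous.comp continuous_fst)
      ((continuous_snd.sub continuous_fst).norm)
  have hDzero : ∀ x w : Euc n, ρo x < ‖w - x‖ → D (x, w) = 0 := by
    intro x w h
    have heq : ψ =ᶠ[nhds (x, w)] (fun _ => (0 : ℝ)) := by
      filter_upwards [hopen.mem_nhds h] with p hp using hψzero p.1 p.2 hp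
    have hf0 : fderiv ℝ ψ (x, w) = 0 := by
      rw [heq.fderiv_eq, fderiv_fun_const]
      rfl
    simp only [hDdef, hf0, ContinuousLinearMap.zero_comp]
  set G : Euc n → ℝ := fun x => ∫ w, Bo w * ψ (x, w) with hGdef
  set G' : Euc n → Euc n →L[ℝ] ℝ := fun x => ∫ w, Bo w • D (x, w) with hG'def
  have setup : ∀ x₀ : Euc n, ∃ bound : Euc n → ℝ,
      Integrable bound volume ∧
      ∀ x ∈ Metric.ball x₀ 1, ∀ w,
        ‖Bo w • D (x, w)‖ ≤ bound w ∧ ‖Bo w * ψ (x, w)‖ ≤ bound w := by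
    intro x₀
    obtain ⟨M, hM⟩ := (isCompact_closedBall x₀ 1).exists_bound_of_continuousOn
      hρo.continuous.continuousOn
    have hx₀mem : x₀ ∈ Metric.closedBall x₀ 1 := Metric.mem_closedBall_self zero_le_one
    have hMpos : 0 < M := lt_of_lt_of_le (hρopos x₀) (le_trans (le_abs_self _) (hM x₀ hx₀mem))
    set R : ℝ := 1 + M with hRdef
    have hRpos : 0 < R := by positivity
    set S := Metric.closedBall x₀ R with hSdef
    obtain ⟨C, hC⟩ := hBobdd S Metric.isBounded_closedBall
    obtain ⟨A, hA⟩ := ((isCompact_closedBall x₀ 1).prod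
      (isCompact_closedBall x₀ R)).exists_bound_of_continuousOn hDcont.continuousOn
    have hsupp : ∀ x ∈ Metric.ball x₀ 1, ∀ w, w ∉ S → ρo x < ‖w - x‖ := by
      intro x hx w hw
      have h1 : R < ‖w - x₀‖ := by
        rw [hSdef, Metric.mem_closedBall, dist_eq_norm, not_le] at hw
        exact hw
      have h2 : ‖x - x₀‖ < 1 := by rwa [Metric.mem_ball, dist_eq_norm] at hx
      have h3 : ρo x ≤ M := le_trans (le_abs_self _) (hM x (Metric.ball_subset_closedBall hx))
      have htri : ‖w - x₀‖ ≤ ‖w - x‖ + ‖x - x₀‖ := by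
        calc ‖w - x₀‖ = ‖w - x + (x - x₀)‖ := by rw [sub_add_sub_cancel]
        _ ≤ _ := norm_add_le _ _
      rw [hRdef] at h1
      linarith
    have hx₀S : x₀ ∈ S := Metric.mem_closedBall_self hRpos.le
    have hC0 : (0 : ℝ) ≤ C := le_trans (abs_nonneg _) (hC x₀ hx₀S)
    refine ⟨S.indicator fun _ => C * max A 1, ?_, ?_⟩
    · exact (MeasureTheory.IntegrableOn.integrable_indicator
        (integrableOn_const ((isCompact_closedBall _ _).measure_lt_top.ne))
        measurableSet_closedBall)
    · intro x hx w
      by_cases hw : w ∈ S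
      · have h1 : |Bo w| ≤ C := hC w hw
        have h2 : ‖D (x, w)‖ ≤ A := hA (x, w) ⟨Metric.ball_subset_closedBall hx, hw⟩
        have h3 : |ψ (x, w)| ≤ 1 := hψle _
        rw [Set.indicator_of_mem hw]
        constructor
        · refine le_trans (ContinuousLinearMap.opNorm_smul_le _ _) ?_
          rw [Real.norm_eq_abs]
          calc |Bo w| * ‖D (x, w)‖ ≤ C * A :=
                mul_le_mul h1 h2 (norm_nonneg _) hC0
            _ ≤ C * max A 1 := mul_le_mul_of_nonneg_left (le_max_left _ _) hC0
        · rw [Real.norm_eq_abs, abs_mul]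
          calc |Bo w| * |ψ (x, w)| ≤ C * 1 :=
                mul_le_mul h1 h3 (abs_nonneg _) hC0
            _ ≤ C * max A 1 := mul_le_mul_of_nonneg_left (le_max_right _ _) hC0
      · have h0 := hsupp x hx w hw
        rw [Set.indicator_of_notMem hw]
        constructor
        · rw [hDzero x w h0]
          simp
        · rw [hψzero x w h0]
          simp
  have hmeasF : ∀ x : Euc n, AEStronglyMeasurable (fun w => Bo w * ψ (x, w)) volume :=
    fun x => hBo.aestronglyMeasurable.mul
      ((hψcont.comp (Continuous.prodMk_right x)).aestronglyMeasurable)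
  have hmeasF' : ∀ x : Euc n, AEStronglyMeasurable (fun w => Bo w • D (x, w)) volume :=
    fun x => hBo.aestronglyMeasurable.smul
      ((hDcont.comp (Continuous.prodMk_right x)).aestronglyMeasurable)
  have hFint : ∀ x : Euc n, Integrable (fun w => Bo w * ψ (x, w)) volume := by
    intro x
    obtain ⟨bound, hbint, hble⟩ := setup x
    exact hbint.mono' (hmeasF x)
      (Filter.Eventually.of_forall fun w => (hble x (Metric.mem_ball_self one_pos) w).2)
  have key : ∀ x₀ : Euc n, HasFDerivAt G (G' x₀) x₀ := by
    intro x₀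
    obtain ⟨bound, hbint, hble⟩ := setup x₀
    exact hasFDerivAt_integral_of_dominated_of_fderiv_le
      (F' := fun x w => Bo w • D (x, w)) (bound := bound) (Metric.ball_mem_nhds x₀ one_pos)
      (Filter.Eventually.of_forall fun x => hmeasF x) (hFint x₀) (hmeasF' x₀)
      (Filter.Eventually.of_forall fun w x hx => (hble x hx w).1) hbint
      (Filter.Eventually.of_forall fun w x _ => (hpart x w).const_mul (Bo w))
  have hG'cont : Continuous G' := by
    rw [continuous_iff_continuousAt]
    intro x₀
    obtain ⟨bound, hbint, hble⟩ := setup x₀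
    refine continuousAt_of_dominated
      (Filter.Eventually.of_forall fun x => hmeasF' x) ?_ hbint
      (Filter.Eventually.of_forall fun w => ?_)
    · filter_upwards [Metric.ball_mem_nhds x₀ one_pos] with x hx
      exact Filter.Eventually.of_forall fun w => (hble x hx w).1
    · exact (((hDcont.comp (continuous_id.prodMk continuous_const)).const_smul (Bo w) :
          Continuous fun x => Bo w • D (x, w))).continuousAt
  have hGdiff : ContDiff ℝ 1 G := by
    rw [contDiff_one_iff_fderiv]
    refine ⟨fun x => (key x).differentiableAt, ?_⟩
    have hfd : fderiv ℝ G = G' := funext fun x => (key x).fderiv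
    rw [hfd]
    exact hG'cont
  have hfin : ∀ x : Euc n,
      (∫ v : Euc n, Bo (x + ρo x • v) * Ψ v) = (ρo x ^ n)⁻¹ * G x := by
    intro x
    have h1 : ∀ v : Euc n,
        Bo (x + ρo x • v) * Ψ v = (fun w => Bo w * ψ (x, w)) (x + ρo x • v) := by
      intro v
      simp only [hψdef]
      rw [add_sub_cancel_left, smul_smul, inv_mul_cancel₀ (hρne x), one_smul]
    calc (∫ v : Euc n, Bo (x + ρo x • v) * Ψ v)
        = ∫ v : Euc n, (fun u => Bo (x + u) * ψ (x, x + u)) (ρo x • v) := by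
          refine integral_congr_ae (Filter.Eventually.of_forall fun v => ?_)
          exact h1 v
      _ = (ρo x ^ Module.finrank ℝ (Euc n))⁻¹ • ∫ u, Bo (x + u) * ψ (x, x + u) :=
          MeasureTheory.Measure.integral_comp_smul_of_nonneg volume
            (fun u => Bo (x + u) * ψ (x, x + u)) (ρo x) (hR := (hρopos x).le)
      _ = (ρo x ^ n)⁻¹ * G x := by
          rw [finrank_euclideanSpace_fin, smul_eq_mul, hGdef]
          congr 1
          exact MeasureTheory.integral_add_left_eq_self
            (fun w => Bo w * ψ (x, w)) x
  have hfun : (fun x : Euc n => ∫ v : Euc n, Bo (x + ρo x • v) * Ψ v)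
      = fun x => (ρo x ^ n)⁻¹ * G x := funext hfin
  rw [hfun]
  exact (((hρo.of_le (by simp)).pow n).inv fun x => pow_ne_zero n (hρne x)).mul hGdiff
end
end

section
/- (Lemma 8, forward part: contractivity of the closed reachable set under smaller perturbations) Assume Σ : ẋ ∈ F(x) is forward complete and F is continuous with nonempty compact convex values. Let X_o ⊆ E, let ε̄ : E → ℝ be continuous with ε̄(x) > 0 for all x, and let K_ε̄ be the reachable set. Then for every continuous ε : E → ℝ with 0 ≤ ε(x) < ε̄(x) for all x: (i) every solution φ of Σ_ε on [0,T] with φ(0) ∈ closure K_ε̄ satisfies φ(t) ∈ closure K_ε̄ for all t ∈ [0,T]; (ii) for every x₀ ∈ frontier (closure K_ε̄) and every solution φ of Σ_ε on [0,T] with T > 0 and φ(0) = x₀ there exists T' ∈ (0,T] such that φ(t) ∈ interior (closure K_ε̄) for all t ∈ (0,T']; (iii) every solution φ of Σ_ε on [0,T] with φ(0) ∈ interior K_ε̄ satisfies φ(t) ∉ frontier K_ε̄ for all t ∈ (0,T]. -/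
open MeasureTheory Set Pointwise Topology

noncomputable section

lemma locInt_intervalIntegrable {n : ℕ} {g : ℝ → Euc n} (h : LocallyIntegrable g volume)
    (a b : ℝ) : IntervalIntegrable g volume a b :=
  intervalIntegrable_iff.2 ((h.integrableOn_isCompact isCompact_uIcc).mono_set Ioc_subset_Icc_self)
lemma ae_shift {P : ℝ → Prop} (a : ℝ) (h : ∀ᵐ s ∂(volume : Measure ℝ), P s) :
    ∀ᵐ s ∂(volume : Measure ℝ), P (s - a) := by
  rw [ae_iff] at h ⊢
  have : {s : ℝ | ¬ P (s - a)} = (fun s => s - a) ⁻¹' {s | ¬ P s} := rfl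
  rw [this]
  exact (measurePreserving_sub_right volume a).quasiMeasurePreserving.preimage_null h
lemma locInt_shift {n : ℕ} {g : ℝ → Euc n} (h : LocallyIntegrable g volume) (a : ℝ) :
    LocallyIntegrable (fun s => g (s - a)) volume := by
  rw [locallyIntegrable_iff] at h ⊢
  intro k hk
  have h1 : IntegrableOn g ((fun s : ℝ => s - a) '' k) volume :=
    h _ (hk.image (continuous_sub_right a))
  have h2 := (measurePreserving_sub_right volume a).integrableOn_comp_preimage
      ((MeasurableEquiv.subRight a).measurableEmbedding) |>.2 h1
  exact h2.mono_set (subset_preimage_image _ _)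
lemma lsc_unif {n : ℕ} {F : Euc n → Set (Euc n)} (hLSC : LSC F) (hVal : NCCValues F)
    (p : Euc n) {r : ℝ} (hr : 0 < r) :
    ∃ δ > (0:ℝ), ∀ y : Euc n, ‖y - p‖ < δ → ∀ v ∈ F p, ∃ w ∈ F y, ‖w - v‖ ≤ r := by
  obtain ⟨hne, hcomp, -⟩ := hVal p
  have hcover : F p ⊆ ⋃ v ∈ F p, Metric.ball v (r/2) := fun v hv =>
    mem_iUnion₂.2 ⟨v, hv, Metric.mem_ball_self (by linarith)⟩
  obtain ⟨t, hts, htfin, htcover⟩ := hcomp.elim_finite_subcover_image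
    (fun v _ => Metric.isOpen_ball) hcover
  -- choose δ for each v ∈ t
  have hchoice : ∀ v ∈ t, ∃ δ > (0:ℝ), ∀ y : Euc n, ‖y - p‖ < δ →
      ∃ w ∈ F y, ‖w - v‖ ≤ r/2 := fun v hv => hLSC p v (hts hv) (r/2) (by linarith)
  choose! δf hδf hδf2 using hchoice
  classical
  obtain ⟨v₀, hv₀⟩ := hne
  obtain ⟨v₁, hv₁, -⟩ := mem_iUnion₂.1 (htcover hv₀)
  have htne : t.Nonempty := ⟨v₁, hv₁⟩
  obtain ⟨δ, hδpos, hδle⟩ : ∃ δ > (0:ℝ), ∀ v ∈ t, δ ≤ δf v := by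
    lift t to Finset (Euc n) using htfin
    obtain ⟨w0, hw0⟩ := htne
    refine ⟨t.inf' ⟨w0, hw0⟩ δf, ?_, fun v hv => Finset.inf'_le _ hv⟩
    exact (Finset.lt_inf'_iff _).2 fun v hv => hδf v hv
  refine ⟨δ, hδpos, fun y hy v hv => ?_⟩
  obtain ⟨vi, hvi, hvball⟩ := mem_iUnion₂.1 (htcover hv)
  obtain ⟨w, hw, hwn⟩ := hδf2 vi hvi y (lt_of_lt_of_le hy (hδle vi hvi))
  refine ⟨w, hw, ?_⟩
  have : ‖w - v‖ ≤ ‖w - vi‖ + ‖vi - v‖ := norm_sub_le_norm_sub_add_norm_sub w vi v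
  have h2 : ‖vi - v‖ < r/2 := by
    have := Metric.mem_ball.1 hvball; rw [dist_eq_norm] at this; rw [norm_sub_rev]; linarith
  linarith
lemma unif_approx {n : ℕ} {F : Euc n → Set (Euc n)} (hUSC : USC F) (hLSC : LSC F)
    (hVal : NCCValues F) {S : Set (Euc n)} (hS : IsCompact S) {r : ℝ} (hr : 0 < r) :
    ∃ δ > (0:ℝ), ∀ x ∈ S, ∀ y : Euc n, ‖y - x‖ < δ →
      F x ⊆ {z | ∃ w ∈ F y, ‖z - w‖ ≤ r} := by
  classical
  have hch : ∀ p : Euc n, ∃ d > (0:ℝ),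
      (∀ x : Euc n, ‖x - p‖ < 2*d → F x ⊆ {z | ∃ w ∈ F p, ‖z - w‖ ≤ r/2}) ∧
      (∀ y : Euc n, ‖y - p‖ < 2*d → ∀ v ∈ F p, ∃ w ∈ F y, ‖w - v‖ ≤ r/2) := by
    intro p
    obtain ⟨d1, hd1, h1⟩ := hUSC p (r/2) (by linarith)
    obtain ⟨d2, hd2, h2⟩ := lsc_unif hLSC hVal p (show (0:ℝ) < r/2 by linarith)
    refine ⟨min d1 d2 / 2, by positivity, fun x hx => h1 x ?_, fun y hy => h2 y ?_⟩
    · calc ‖x - p‖ < 2 * (min d1 d2 / 2) := hx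
        _ ≤ d1 := by have := min_le_left d1 d2; linarith
    · calc ‖y - p‖ < 2 * (min d1 d2 / 2) := hy
        _ ≤ d2 := by have := min_le_right d1 d2; linarith
  choose! d hd hdu hdl using hch
  rcases S.eq_empty_or_nonempty with hSe | hSne
  · exact ⟨1, one_pos, by simp [hSe]⟩
  have hcover : S ⊆ ⋃ p ∈ S, Metric.ball p (d p) := fun p hp =>
    mem_iUnion₂.2 ⟨p, hp, Metric.mem_ball_self (hd p)⟩
  obtain ⟨t, hts, htfin, htcover⟩ := hS.elim_finite_subcover_image
    (fun p _ => Metric.isOpen_ball) hcover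
  obtain ⟨p₀, hp₀⟩ := hSne
  obtain ⟨p₁, hp₁, -⟩ := mem_iUnion₂.1 (htcover hp₀)
  obtain ⟨δ, hδpos, hδle⟩ : ∃ δ > (0:ℝ), ∀ p ∈ t, δ ≤ d p := by
    lift t to Finset (Euc n) using htfin
    refine ⟨t.inf' ⟨p₁, hp₁⟩ d, ?_, fun p hp => Finset.inf'_le _ hp⟩
    exact (Finset.lt_inf'_iff _).2 fun p hp => hd p
  refine ⟨δ, hδpos, fun x hx y hy z hz => ?_⟩
  obtain ⟨p, hpt, hpball⟩ := mem_iUnion₂.1 (htcover hx)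
  have hxp : ‖x - p‖ < d p := by
    have := Metric.mem_ball.1 hpball; rwa [dist_eq_norm] at this
  have hyp : ‖y - p‖ < 2 * d p := by
    have : ‖y - p‖ ≤ ‖y - x‖ + ‖x - p‖ := norm_sub_le_norm_sub_add_norm_sub y x p
    have hδ := hδle p hpt
    linarith
  obtain ⟨w', hw', hw'n⟩ := hdu p x (by have := hd p; linarith) hz
  obtain ⟨w, hw, hwn⟩ := hdl p y hyp w' hw'
  refine ⟨w, hw, ?_⟩
  have : ‖z - w‖ ≤ ‖z - w'‖ + ‖w' - w‖ := norm_sub_le_norm_sub_add_norm_sub z w' w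
  rw [norm_sub_rev] at hwn
  linarith
lemma unif_cont_near {n : ℕ} {h : Euc n → ℝ} (hc : Continuous h) {S : Set (Euc n)}
    (hS : IsCompact S) {r : ℝ} (hr : 0 < r) :
    ∃ δ > (0:ℝ), ∀ x ∈ S, ∀ y : Euc n, ‖y - x‖ < δ → |h y - h x| < r := by
  have hS' : IsCompact (Metric.cthickening 1 S) := hS.cthickening
  have huc := hS'.uniformContinuousOn_of_continuous hc.continuousOn
  obtain ⟨δ, hδ, hδ'⟩ := (Metric.uniformContinuousOn_iff.1 huc) r hr
  refine ⟨min δ 1, by positivity, fun x hx y hy => ?_⟩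
  have hxS : x ∈ Metric.cthickening 1 S := Metric.self_subset_cthickening S hx
  have hyS : y ∈ Metric.cthickening 1 S := by
    apply Metric.mem_cthickening_of_dist_le y x 1 S hx
    rw [dist_eq_norm]
    exact le_trans (le_of_lt hy) (min_le_right _ _)
  have := hδ' y hyS x hxS (by rw [dist_eq_norm]; exact lt_of_lt_of_le hy (min_le_left _ _))
  rwa [Real.dist_eq] at this
lemma IsSolution.mono {n : ℕ} {F : Euc n → Set (Euc n)} {ε : Euc n → ℝ} {I I' : Set ℝ}
    {φ : ℝ → Euc n} (h : IsSolution F ε I φ) (hsub : I' ⊆ I) : IsSolution F ε I' φ := by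
  obtain ⟨g, h1, h2, h3⟩ := h
  exact ⟨g, h1, fun t₀ ht₀ t ht => h2 t₀ (hsub ht₀) t (hsub ht),
    h3.mono (fun s hs hs' => hs (hsub hs'))⟩
lemma shift_sol {n : ℕ} {F : Euc n → Set (Euc n)} (hUSC : USC F) (hLSC : LSC F)
    (hVal : NCCValues F) {ε εb : Euc n → ℝ} (hεc : Continuous ε) (hεbc : Continuous εb)
    (hlt : ∀ x, 0 ≤ ε x ∧ ε x < εb x) {T : ℝ} (hT : 0 ≤ T) {φ : ℝ → Euc n}
    (hφ : IsSolution F ε (Icc 0 T) φ) :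
    ∃ ρ > (0:ℝ), ∀ c₀ v : Euc n, (∀ s ∈ Icc (0:ℝ) T, ‖c₀ + s • v‖ ≤ ρ) → ‖v‖ ≤ ρ →
      IsSolution F εb (Icc 0 T) (fun s => φ s + (c₀ + s • v)) := by
  obtain ⟨g, hg, hint, hae⟩ := hφ
  -- the trajectory is compact
  set φ' : ℝ → Euc n := fun t => φ 0 + ∫ s in (0:ℝ)..t, g s with hφ'def
  have hφ'cont : Continuous φ' :=
    continuous_const.add (intervalIntegral.continuous_primitive
      (fun a b => locInt_intervalIntegrable hg a b) 0)
  have hφeq : ∀ t ∈ Icc (0:ℝ) T, φ t = φ' t := fun t ht =>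
    hint 0 ⟨le_refl _, hT⟩ t ht
  set S : Set (Euc n) := φ' '' Icc 0 T with hSdef
  have hScomp : IsCompact S := (isCompact_Icc).image hφ'cont
  have hSne : S.Nonempty := ⟨φ' 0, mem_image_of_mem _ ⟨le_refl _, hT⟩⟩
  -- minimum gap
  obtain ⟨x₀, hx₀S, hx₀min⟩ := hScomp.exists_isMinOn hSne
    ((hεbc.sub hεc).continuousOn)
  set m : ℝ := εb x₀ - ε x₀ with hmdef
  have hm : 0 < m := sub_pos.2 (hlt x₀).2
  have hmle : ∀ x ∈ S, m ≤ εb x - ε x := fun x hx => hx₀min hx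
  set r : ℝ := m / 4 with hrdef
  have hr : 0 < r := by positivity
  obtain ⟨δ₁, hδ₁, hδ₁'⟩ := unif_approx hUSC hLSC hVal hScomp hr
  obtain ⟨δ₂, hδ₂, hδ₂'⟩ := unif_cont_near hεbc hScomp hr
  refine ⟨min (min δ₁ δ₂) r / 2, by positivity, fun c₀ v hcv hv => ?_⟩
  set ρ : ℝ := min (min δ₁ δ₂) r / 2 with hρdef
  have hρδ₁ : ρ < δ₁ := by
    have h1 : min (min δ₁ δ₂) r ≤ δ₁ := le_trans (min_le_left _ _) (min_le_left _ _)
    have : 0 < min (min δ₁ δ₂) r := by positivity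
    simp only [hρdef]; linarith
  have hρδ₂ : ρ < δ₂ := by
    have h1 : min (min δ₁ δ₂) r ≤ δ₂ := le_trans (min_le_left _ _) (min_le_right _ _)
    have : 0 < min (min δ₁ δ₂) r := by positivity
    simp only [hρdef]; linarith
  have hρr : ρ ≤ r := by
    have h1 : min (min δ₁ δ₂) r ≤ r := min_le_right _ _
    have : 0 < min (min δ₁ δ₂) r := by positivity
    simp only [hρdef]; linarith
  refine ⟨fun s => g s + v, hg.add (locallyIntegrable_const v), ?_, ?_⟩
  · intro t₀ ht₀ t ht
    have hiadd : ∫ s in t₀..t, (g s + v) =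
        (∫ s in t₀..t, g s) + (t - t₀) • v := by
      rw [intervalIntegral.integral_add (locInt_intervalIntegrable hg t₀ t)
        intervalIntegrable_const, intervalIntegral.integral_const]
    rw [hiadd]
    have h1 := hint t₀ ht₀ t ht
    have h2 : (t:ℝ) • v = t₀ • v + (t - t₀) • v := by rw [← add_smul]; ring_nf
    simp only []
    rw [h1, h2]; abel
  · filter_upwards [hae] with s hs hsI
    have hgs := hs hsI
    obtain ⟨f, hf, b, hb, hfb⟩ := Set.mem_add.1 hgs
    have hbn : ‖b‖ ≤ ε (φ s) := mem_closedBall_zero_iff.1 hb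
    have hφS : φ s ∈ S := by rw [hφeq s hsI]; exact mem_image_of_mem _ hsI
    have hdist : ‖(φ s + (c₀ + s • v)) - φ s‖ ≤ ρ := by
      simpa using hcv s hsI
    set y : Euc n := φ s + (c₀ + s • v) with hydef
    have hFsub := hδ₁' (φ s) hφS y (lt_of_le_of_lt hdist hρδ₁)
    obtain ⟨w, hw, hwn⟩ := hFsub hf
    have hεb : |εb y - εb (φ s)| < r := hδ₂' (φ s) hφS y (lt_of_le_of_lt hdist hρδ₂)
    refine Set.mem_add.2 ⟨w, hw, (f - w) + b + v, ?_, by rw [← hfb]; abel⟩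
    rw [mem_closedBall_zero_iff]
    have h1 : ‖(f - w) + b + v‖ ≤ ‖f - w‖ + ‖b‖ + ‖v‖ := norm_add₃_le
    have h2 : m ≤ εb (φ s) - ε (φ s) := hmle _ hφS
    have h3 : εb (φ s) - εb y ≤ |εb y - εb (φ s)| := by
      rw [abs_sub_comm]; exact le_abs_self _
    have : r = m / 4 := hrdef
    linarith [hwn, hv]
lemma reach_invariant {n : ℕ} {F : Euc n → Set (Euc n)} {εf : Euc n → ℝ}
    {Xo : Set (Euc n)} {y : Euc n} (hy : y ∈ Reach F εf Xo) {τ : ℝ} (hτ : 0 ≤ τ)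
    {ψ : ℝ → Euc n} (hψ : IsSolution F εf (Icc 0 τ) ψ) (hψ0 : ψ 0 = y) :
    ψ τ ∈ Reach F εf Xo := by
  rcases eq_or_lt_of_le hτ with hτ0 | hτpos
  · rw [← hτ0, hψ0]; exact hy
  obtain ⟨t₁, ht₁, φ₁, hφ₁, hφ₁0, hφ₁t₁⟩ := hy
  obtain ⟨g₁, hg₁, hint₁, hae₁⟩ := hφ₁
  obtain ⟨g₂, hg₂, hint₂, hae₂⟩ := hψ
  classical
  set φ : ℝ → Euc n := fun s => if s ≤ t₁ then φ₁ s else ψ (s - t₁) with hφdef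
  set g : ℝ → Euc n := fun s => if s < t₁ then g₁ s else g₂ (s - t₁) with hgdef
  have hg2s : LocallyIntegrable (fun s => g₂ (s - t₁)) volume := locInt_shift hg₂ t₁
  have hgloc : LocallyIntegrable g volume := by
    rw [locallyIntegrable_iff] at *
    intro k hk
    have h1 : IntegrableOn g (k ∩ Iio t₁) volume := by
      refine ((hg₁ k hk).mono_set inter_subset_left).congr_fun ?_
        ((hk.isClosed.measurableSet).inter measurableSet_Iio)
      intro s hs
      exact (if_pos hs.2).symm
    have h2 : IntegrableOn g (k ∩ Ici t₁) volume := by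
      refine ((hg2s k hk).mono_set inter_subset_left).congr_fun ?_
        ((hk.isClosed.measurableSet).inter measurableSet_Ici)
      intro s hs
      exact (if_neg (not_lt.2 hs.2)).symm
    have : IntegrableOn g ((k ∩ Iio t₁) ∪ (k ∩ Ici t₁)) volume := h1.union h2
    refine this.mono_set ?_
    intro s hs
    by_cases h : s < t₁
    · exact Or.inl ⟨hs, h⟩
    · exact Or.inr ⟨hs, not_lt.1 h⟩
  -- basic equalities
  have hφeq1 : ∀ s ∈ Icc (0:ℝ) t₁, φ s = φ₁ s := fun s hs => if_pos hs.2
  have hφeq2 : ∀ s, t₁ ≤ s → φ s = ψ (s - t₁) := by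
    intro s hs
    rcases eq_or_lt_of_le hs with h | h
    · simp only [hφdef, ← h, if_pos le_rfl, sub_self, hψ0, hφ₁t₁]
    · simp only [hφdef, if_neg (not_le.2 h)]
  -- integral of g over subintervals
  have hgint : ∀ a b : ℝ, IntervalIntegrable g volume a b := locInt_intervalIntegrable hgloc
  have hI1 : ∀ t ∈ Icc (0:ℝ) t₁, ∫ s in (0:ℝ)..t, g s = ∫ s in (0:ℝ)..t, g₁ s := by
    intro t ht
    apply intervalIntegral.integral_congr_ae
    rw [ae_iff]
    refine measure_mono_null (fun s hs => ?_) (Real.volume_singleton (a := t₁))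
    simp only [mem_setOf_eq, Classical.not_imp] at hs
    obtain ⟨hsI, hne⟩ := hs
    rw [uIoc_of_le ht.1] at hsI
    rw [mem_singleton_iff]
    by_contra hst
    have hlt : s < t₁ := lt_of_le_of_ne (le_trans hsI.2 ht.2) hst
    exact hne (if_pos hlt)
  have hI2 : ∀ t, t₁ ≤ t → ∫ s in t₁..t, g s = ∫ s in (0:ℝ)..(t - t₁), g₂ s := by
    intro t ht
    have : ∫ s in t₁..t, g s = ∫ s in t₁..t, g₂ (s - t₁) := by
      apply intervalIntegral.integral_congr
      intro s hs
      rw [uIcc_of_le ht] at hs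
      exact if_neg (not_lt.2 hs.1)
    rw [this, intervalIntegral.integral_comp_sub_right _ t₁, sub_self]
  -- cumulative formula
  have hcum : ∀ t ∈ Icc (0:ℝ) (t₁ + τ), φ t = φ 0 + ∫ s in (0:ℝ)..t, g s := by
    intro t ht
    have hφ0 : φ 0 = φ₁ 0 := hφeq1 0 ⟨le_refl _, ht₁⟩
    by_cases hcase : t ≤ t₁
    · rw [hφeq1 t ⟨ht.1, hcase⟩, hI1 t ⟨ht.1, hcase⟩, hφ0]
      exact hint₁ 0 ⟨le_refl _, ht₁⟩ t ⟨ht.1, hcase⟩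
    · push_neg at hcase
      have htt : t₁ ≤ t := le_of_lt hcase
      have hsplit : ∫ s in (0:ℝ)..t, g s =
          (∫ s in (0:ℝ)..t₁, g s) + ∫ s in t₁..t, g s :=
        (intervalIntegral.integral_add_adjacent_intervals (hgint 0 t₁) (hgint t₁ t)).symm
      have hmem : t - t₁ ∈ Icc (0:ℝ) τ := ⟨by linarith, by linarith [ht.2]⟩
      rw [hφeq2 t htt, hsplit, hI1 t₁ ⟨ht₁, le_refl _⟩, hI2 t htt, hφ0]
      have e1 : ψ (t - t₁) = ψ 0 + ∫ s in (0:ℝ)..(t - t₁), g₂ s :=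
        hint₂ 0 ⟨le_refl _, hτ⟩ (t - t₁) hmem
      have e2 : φ₁ t₁ = φ₁ 0 + ∫ s in (0:ℝ)..t₁, g₁ s :=
        hint₁ 0 ⟨le_refl _, ht₁⟩ t₁ ⟨ht₁, le_refl _⟩
      rw [e1, hψ0, ← hφ₁t₁, e2]; abel
  refine ⟨t₁ + τ, by linarith, φ, ⟨g, hgloc, ?_, ?_⟩, ?_, ?_⟩
  · intro t₀ ht₀ t ht
    rw [hcum t ht, hcum t₀ ht₀]
    have := intervalIntegral.integral_interval_sub_left (hgint 0 t) (hgint 0 t₀)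
    rw [← this]; abel
  · have hae₂' : ∀ᵐ s ∂(volume : Measure ℝ), (s - t₁) ∈ Icc (0:ℝ) τ →
        g₂ (s - t₁) ∈ F (ψ (s - t₁)) + Metric.closedBall 0 (εf (ψ (s - t₁))) :=
      ae_shift t₁ hae₂
    filter_upwards [hae₁, hae₂'] with s h1 h2 hsI
    by_cases hcase : s < t₁
    · have hs1 : s ∈ Icc (0:ℝ) t₁ := ⟨hsI.1, le_of_lt hcase⟩
      rw [hφeq1 s hs1]
      simpa only [hgdef, if_pos hcase] using h1 hs1
    · push_neg at hcase
      have hs2 : s - t₁ ∈ Icc (0:ℝ) τ := ⟨by linarith, by linarith [hsI.2]⟩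
      rw [hφeq2 s hcase]
      simpa only [hgdef, if_neg (not_lt.2 hcase)] using h2 hs2
  · rw [hφeq1 0 ⟨le_refl _, ht₁⟩]; exact hφ₁0
  · rw [hφeq2 (t₁ + τ) (by linarith), add_sub_cancel_left]
lemma ball_lemma {n : ℕ} {F : Euc n → Set (Euc n)} (hUSC : USC F) (hLSC : LSC F)
    (hVal : NCCValues F) {ε εb : Euc n → ℝ} (hεc : Continuous ε) (hεbc : Continuous εb)
    (hlt : ∀ x, 0 ≤ ε x ∧ ε x < εb x) {Xo : Set (Euc n)} {T : ℝ} {φ : ℝ → Euc n}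
    (hφ : IsSolution F ε (Icc 0 T) φ) (h0 : φ 0 ∈ closure (Reach F εb Xo))
    {t : ℝ} (ht : t ∈ Ioc 0 T) : φ t ∈ interior (Reach F εb Xo) := by
  have hT : (0:ℝ) < T := lt_of_lt_of_le ht.1 ht.2
  obtain ⟨ρ, hρ, hshift⟩ := shift_sol hUSC hLSC hVal hεc hεbc hlt hT.le hφ
  set β : ℝ := min ρ (ρ / (2 * T)) with hβdef
  have hβ : 0 < β := lt_min hρ (by positivity)
  set η : ℝ := min (ρ / 2) (t * β / 2) with hηdef
  have hη : 0 < η := lt_min (by positivity) (div_pos (mul_pos ht.1 hβ) two_pos)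
  obtain ⟨y, hyK, hyd⟩ := Metric.mem_closure_iff.1 h0 η hη
  set c₀ : Euc n := y - φ 0 with hc₀def
  have hc₀ : ‖c₀‖ < η := by
    rw [hc₀def, ← dist_eq_norm, dist_comm]; exact hyd
  have hc₀ρ : ‖c₀‖ ≤ ρ / 2 := le_trans hc₀.le (min_le_left _ _)
  have hc₀t : ‖c₀‖ < t * β / 2 := lt_of_lt_of_le hc₀ (min_le_right _ _)
  refine mem_interior_iff_mem_nhds.2 (Filter.mem_of_superset
    (Metric.ball_mem_nhds _ (div_pos (mul_pos ht.1 hβ) two_pos)) ?_)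
  intro z hz
  rw [Metric.mem_ball, dist_eq_norm] at hz
  set c : Euc n := z - φ t - c₀ with hcdef
  have hc : ‖c‖ < t * β := by
    have h1 : ‖c‖ ≤ ‖z - φ t‖ + ‖c₀‖ := by
      rw [hcdef]; exact norm_sub_le _ _
    linarith
  set v : Euc n := t⁻¹ • c with hvdef
  have hvn : ‖v‖ = t⁻¹ * ‖c‖ := by
    rw [hvdef, norm_smul, Real.norm_eq_abs, abs_of_pos (inv_pos.2 ht.1)]
  have hvβ : ‖v‖ < β := by
    rw [hvn]
    calc t⁻¹ * ‖c‖ < t⁻¹ * (t * β) := by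
          apply mul_lt_mul_of_pos_left hc (inv_pos.2 ht.1)
      _ = β := by
          rw [inv_mul_eq_div, mul_comm, mul_div_assoc, div_self (ne_of_gt ht.1), mul_one]
  have hvρ : ‖v‖ ≤ ρ := le_trans hvβ.le (min_le_left _ _)
  have hcond : ∀ s ∈ Icc (0:ℝ) T, ‖c₀ + s • v‖ ≤ ρ := by
    intro s hs
    have h1 : ‖c₀ + s • v‖ ≤ ‖c₀‖ + ‖s • v‖ := norm_add_le _ _
    have h2 : ‖s • v‖ = s * ‖v‖ := by
      rw [norm_smul, Real.norm_eq_abs, abs_of_nonneg hs.1]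
    have h3 : s * ‖v‖ ≤ T * ‖v‖ := mul_le_mul_of_nonneg_right hs.2 (norm_nonneg _)
    have h4 : ‖v‖ ≤ ρ / (2 * T) := le_trans hvβ.le (min_le_right _ _)
    have h5 : T * ‖v‖ ≤ T * (ρ / (2 * T)) := mul_le_mul_of_nonneg_left h4 hT.le
    have h6 : T * (ρ / (2 * T)) = ρ / 2 := by field_simp
    linarith
  have hψ := hshift c₀ v hcond hvρ
  have hψ' := hψ.mono (Icc_subset_Icc_right ht.2)
  have hψ0 : φ 0 + (c₀ + (0:ℝ) • v) = y := by
    rw [zero_smul, add_zero, hc₀def]; abel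
  have := reach_invariant hyK ht.1.le hψ' (by simpa using hψ0)
  have hψt : φ t + (c₀ + t • v) = z := by
    have htv : t • v = c := by
      rw [hvdef, smul_smul, mul_inv_cancel₀ (ne_of_gt ht.1), one_smul]
    rw [htv, hcdef]; abel
  simpa [hψt] using this

/-- Lemma 8, forward part: contractivity of the closed reachable set under
smaller perturbations. -/
theorem lemma8_forward_contractivity {n : ℕ} (hn : 1 ≤ n)
    (F : Euc n → Set (Euc n))
    (hFC : ForwardComplete F) (hUSC : USC F) (hLSC : LSC F) (hVal : NCCValues F)
    (Xo : Set (Euc n)) (εbar : Euc n → ℝ) (hεbar : Continuous εbar)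
    (hεbarpos : ∀ x, 0 < εbar x)
    (ε : Euc n → ℝ) (hε : Continuous ε) (hεlt : ∀ x, 0 ≤ ε x ∧ ε x < εbar x) :
    (∀ (T : ℝ) (φ : ℝ → Euc n), IsSolution F ε (Icc 0 T) φ →
      φ 0 ∈ closure (Reach F εbar Xo) →
      ∀ t ∈ Icc (0:ℝ) T, φ t ∈ closure (Reach F εbar Xo)) ∧
    (∀ x₀ ∈ frontier (closure (Reach F εbar Xo)), ∀ T : ℝ, 0 < T →
      ∀ φ : ℝ → Euc n, IsSolution F ε (Icc 0 T) φ → φ 0 = x₀ →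
        ∃ T' ∈ Ioc (0:ℝ) T, ∀ t ∈ Ioc (0:ℝ) T',
          φ t ∈ interior (closure (Reach F εbar Xo))) ∧
    (∀ (T : ℝ) (φ : ℝ → Euc n), IsSolution F ε (Icc 0 T) φ →
      φ 0 ∈ interior (Reach F εbar Xo) →
      ∀ t ∈ Ioc (0:ℝ) T, φ t ∉ frontier (Reach F εbar Xo)) := by
  refine ⟨?_, ?_, ?_⟩
  · -- part (i)
    intro T φ hφ h0 t ht
    have hT : (0:ℝ) ≤ T := le_trans ht.1 ht.2
    obtain ⟨ρ, hρ, hshift⟩ := shift_sol hUSC hLSC hVal hε hεbar hεlt hT hφ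
    rw [Metric.mem_closure_iff]
    intro η hη
    obtain ⟨y, hyK, hyd⟩ := Metric.mem_closure_iff.1 h0 (min ρ η) (lt_min hρ hη)
    set c₀ : Euc n := y - φ 0 with hc₀def
    have hc₀ : ‖c₀‖ < min ρ η := by
      rw [hc₀def, ← dist_eq_norm, dist_comm]; exact hyd
    have hcond : ∀ s ∈ Icc (0:ℝ) T, ‖c₀ + s • (0:Euc n)‖ ≤ ρ := by
      intro s _
      rw [smul_zero, add_zero]
      exact le_trans hc₀.le (min_le_left _ _)
    have hψ := (hshift c₀ 0 hcond (by simpa using hρ.le)).mono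
      (Icc_subset_Icc_right ht.2)
    have hψ0 : φ 0 + (c₀ + (0:ℝ) • (0:Euc n)) = y := by
      rw [smul_zero, add_zero, hc₀def]; abel
    have hmem := reach_invariant hyK ht.1 hψ (by simpa using hψ0)
    refine ⟨φ t + (c₀ + t • (0:Euc n)), by simpa using hmem, ?_⟩
    rw [dist_eq_norm, smul_zero, add_zero]
    have : φ t - (φ t + c₀) = -c₀ := by abel
    rw [this, norm_neg]
    exact lt_of_lt_of_le hc₀ (min_le_right _ _)
  · -- part (ii)
    intro x₀ hx₀ T hT φ hφ hφ0
    have h0 : φ 0 ∈ closure (Reach F εbar Xo) := by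
      rw [hφ0]
      exact closure_closure (s := Reach F εbar Xo) ▸ frontier_subset_closure hx₀
    refine ⟨T, ⟨hT, le_refl _⟩, fun t htt => ?_⟩
    exact interior_mono subset_closure
      (ball_lemma hUSC hLSC hVal hε hεbar hεlt hφ h0 htt)
  · -- part (iii)
    intro T φ hφ h0 t ht
    have h0' : φ 0 ∈ closure (Reach F εbar Xo) := subset_closure (interior_subset h0)
    have hint := ball_lemma hUSC hLSC hVal hε hεbar hεlt hφ h0' ht
    exact fun hfr => hfr.2 hint
end
end

section
/- (Lemma 9: local recurrence of the reachable set) Assume Σ : ẋ ∈ F(x) is forward complete and F is continuous with nonempty compact convex values. Let X_o ⊆ E and let ε₁, ε̄ : E → ℝ be continuous functions with 0 < ε₁(x) < ε̄(x) for all x, and let K_ε̄ be the reachable set. Then there exists a closed set U₁ ⊆ E with frontier K_ε̄ ⊆ interior U₁ such that for every continuous ε : E → ℝ with 0 < ε(x) ≤ ε₁(x) for all x: (i) K_ε̄ is locally recurrent for Σ_ε on U₁; and (ii) E ∖ K_ε̄ is locally recurrent for Σ⁻_ε on U₁. -/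
open MeasureTheory Set Pointwise Topology

noncomputable section

namespace L9
variable {n : ℕ}

lemma locallyIntegrable_of_forall {f : ℝ → Euc n}
    (h : ∀ a b : ℝ, IntervalIntegrable f volume a b) : LocallyIntegrable f volume := by
  rw [locallyIntegrable_iff]
  intro k hk
  obtain ⟨r, hr⟩ := hk.isBounded.subset_closedBall 0
  have : IntegrableOn f (Metric.closedBall (0:ℝ) r) volume := by
    have := (h (-r) r)
    rcases le_or_gt (-r) r with hle | hlt
    · have := (intervalIntegrable_iff_integrableOn_Icc_of_le hle).1 (h (-r) r)
      simpa [Real.closedBall_eq_Icc, zero_sub, zero_add] using this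
    · have : Metric.closedBall (0:ℝ) r = ∅ := by
        apply Metric.closedBall_eq_empty.2; linarith
      simp [this]
  exact this.mono_set hr

lemma intervalIntegrable_of_locallyIntegrable {f : ℝ → Euc n}
    (h : LocallyIntegrable f volume) (a b : ℝ) : IntervalIntegrable f volume a b := by
  rw [intervalIntegrable_iff]
  exact (h.integrableOn_isCompact isCompact_uIcc).mono_set Set.uIoc_subset_uIcc

lemma isSolution_mono {F : Euc n → Set (Euc n)} {ε : Euc n → ℝ} {I J : Set ℝ} {φ : ℝ → Euc n}
    (h : IsSolution F ε I φ) (hJ : J ⊆ I) : IsSolution F ε J φ := by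
  obtain ⟨g, hg, hid, hae⟩ := h
  exact ⟨g, hg, fun t₀ ht₀ t ht => hid t₀ (hJ ht₀) t (hJ ht), hae.mono fun s hs hsJ => hs (hJ hsJ)⟩

lemma isSolution_of_anchor {F : Euc n → Set (Euc n)} {ε : Euc n → ℝ} {I : Set ℝ} {φ : ℝ → Euc n}
    {g : ℝ → Euc n} {c : ℝ} (hc : c ∈ I) (hg : LocallyIntegrable g volume)
    (hid : ∀ t ∈ I, φ t = φ c + ∫ s in c..t, g s)
    (hae : ∀ᵐ s ∂volume, s ∈ I → g s ∈ F (φ s) + Metric.closedBall (0 : Euc n) (ε (φ s))) :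
    IsSolution F ε I φ := by
  refine ⟨g, hg, fun t₀ ht₀ t ht => ?_, hae⟩
  have h1 := hid t₀ ht₀
  have h2 := hid t ht
  have hadd : (∫ s in t₀..c, g s) + (∫ s in c..t, g s) = ∫ s in t₀..t, g s :=
    intervalIntegral.integral_add_adjacent_intervals
      (intervalIntegrable_of_locallyIntegrable hg _ _)
      (intervalIntegrable_of_locallyIntegrable hg _ _)
  have hsym : (∫ s in t₀..c, g s) = - ∫ s in c..t₀, g s := intervalIntegral.integral_symm _ _
  rw [h1, h2, ← hadd, hsym]
  abel

lemma ae_comp_sub_right {p : ℝ → Prop} (h : ∀ᵐ s ∂(volume : Measure ℝ), p s) (τ : ℝ) :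
    ∀ᵐ s ∂(volume : Measure ℝ), p (s - τ) := by
  rw [ae_iff] at h ⊢
  set N := {s : ℝ | ¬ p s} with hN
  have hsub : {s : ℝ | ¬ p (s - τ)} ⊆ (fun s : ℝ => s - τ) ⁻¹' (toMeasurable volume N) := by
    intro s hs; exact subset_toMeasurable _ _ hs
  refine measure_mono_null hsub ?_
  have : (fun s : ℝ => s - τ) = (fun s : ℝ => s + (-τ)) := by funext s; ring
  rw [this, measure_preimage_add_right, measure_toMeasurable]
  exact h

lemma ae_comp_const_sub {p : ℝ → Prop} (h : ∀ᵐ s ∂(volume : Measure ℝ), p s) (c : ℝ) :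
    ∀ᵐ s ∂(volume : Measure ℝ), p (c - s) := by
  rw [ae_iff] at h ⊢
  set N := {s : ℝ | ¬ p s} with hN
  have hsub : {s : ℝ | ¬ p (c - s)} ⊆ (fun s : ℝ => c - s) ⁻¹' (toMeasurable volume N) := by
    intro s hs; exact subset_toMeasurable _ _ hs
  refine measure_mono_null hsub ?_
  have : (fun s : ℝ => c - s) = (fun s : ℝ => s + c) ∘ (fun s : ℝ => -s) := by
    funext s; simp [Function.comp]; ring
  rw [this, Set.preimage_comp, Measure.measure_preimage_neg, measure_preimage_add_right,
    measure_toMeasurable]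
  exact h

lemma ae_ne_vol (T : ℝ) : ∀ᵐ s ∂(volume : Measure ℝ), s ≠ T := by
  rw [ae_iff]
  simpa using (Real.volume_singleton (a := T))

lemma solution_continuousOn {g : ℝ → Euc n} (hg : LocallyIntegrable g volume)
    {φ : ℝ → Euc n} {I : Set ℝ} {c : ℝ}
    (hid : ∀ t ∈ I, φ t = φ c + ∫ s in c..t, g s) : ContinuousOn φ I := by
  have hcont : Continuous fun t => φ c + ∫ s in c..t, g s :=
    continuous_const.add
      (intervalIntegral.continuous_primitive
        (fun a b => intervalIntegrable_of_locallyIntegrable hg a b) c)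
  exact hcont.continuousOn.congr hid

lemma speed_bound {G : Euc n → Set (Euc n)} {ε : Euc n → ℝ} {z : Euc n} {r M σ : ℝ}
    (hr : 0 < r) (hM : 0 ≤ M) (hσ : 0 < σ) (hσM : σ * M ≤ r / 8)
    (hbound : ∀ y : Euc n, dist y z ≤ r →
      ∀ v ∈ G y + Metric.closedBall (0 : Euc n) (ε y), ‖v‖ ≤ M)
    {φ : ℝ → Euc n} (hφ : IsSolution G ε (Icc 0 σ) φ) (h0 : dist (φ 0) z ≤ r / 4) :
    (∀ s ∈ Icc (0:ℝ) σ, dist (φ s) z < r / 2) ∧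
    (∀ s ∈ Icc (0:ℝ) σ, dist (φ s) (φ 0) ≤ M * s) := by
  obtain ⟨g, hg, hid, hae⟩ := hφ
  have h0I : (0:ℝ) ∈ Icc (0:ℝ) σ := ⟨le_refl 0, hσ.le⟩
  have hid0 : ∀ t ∈ Icc (0:ℝ) σ, φ t = φ 0 + ∫ s in (0:ℝ)..t, g s := fun t ht => hid 0 h0I t ht
  have hcont : ContinuousOn φ (Icc (0:ℝ) σ) := solution_continuousOn hg hid0
  -- integral norm bound helper
  have hnormint : ∀ T ∈ Icc (0:ℝ) σ, (∀ᵐ u ∂(volume : Measure ℝ), u ∈ Set.uIoc (0:ℝ) T → ‖g u‖ ≤ M) →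
      dist (φ T) (φ 0) ≤ M * T := by
    intro T hT haeb
    have := intervalIntegral.norm_integral_le_of_norm_le_const_ae (f := g) (a := 0) (b := T) haeb
    rw [dist_eq_norm, hid0 T hT]
    simpa [abs_of_nonneg hT.1] using this
  have main : ∀ s ∈ Icc (0:ℝ) σ, dist (φ s) z < r / 2 := by
    by_contra hcon
    push_neg at hcon
    obtain ⟨s₀, hs₀, hs₀d⟩ := hcon
    set Bad := {s | s ∈ Icc (0:ℝ) σ ∧ r / 2 ≤ dist (φ s) z} with hBad
    have hBadsub : Bad ⊆ Icc (0:ℝ) σ := fun s hs => hs.1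
    have hBadclosed : IsClosed Bad := by
      have hfc : ContinuousOn (fun s => dist (φ s) z) (Icc (0:ℝ) σ) :=
        continuous_dist.comp_continuousOn (f := fun s => (φ s, z)) (hcont.prodMk continuousOn_const)
      have : Bad = Icc (0:ℝ) σ ∩ (fun s => dist (φ s) z) ⁻¹' (Ici (r/2)) := by
        ext s; simp [hBad, Set.mem_setOf_eq, and_comm]
      rw [this]
      exact hfc.preimage_isClosed_of_isClosed isClosed_Icc isClosed_Ici
    have hBadcpt : IsCompact Bad := isCompact_Icc.of_isClosed_subset hBadclosed hBadsub
    have hne : Bad.Nonempty := ⟨s₀, hs₀, hs₀d⟩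
    set τ := sInf Bad with hτdef
    have hτmem : τ ∈ Bad := hBadcpt.sInf_mem hne
    have hτIcc : τ ∈ Icc (0:ℝ) σ := hτmem.1
    have hτlb : ∀ u ∈ Bad, τ ≤ u := fun u hu => csInf_le hBadcpt.bddBelow hu
    have hgood : ∀ u, 0 ≤ u → u < τ → dist (φ u) z < r / 2 := by
      intro u hu0 huτ
      by_contra hge
      push_neg at hge
      have : u ∈ Bad := ⟨⟨hu0, huτ.le.trans hτIcc.2⟩, hge⟩
      exact absurd (hτlb u this) (not_le.2 huτ)
    have haeb : ∀ᵐ u ∂(volume : Measure ℝ), u ∈ Set.uIoc (0:ℝ) τ → ‖g u‖ ≤ M := by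
      filter_upwards [hae, ae_ne_vol τ] with u hu hne' huI
      rw [Set.uIoc_of_le hτIcc.1] at huI
      have hu0 : 0 < u := huI.1
      have huτ : u < τ := lt_of_le_of_ne huI.2 hne'
      have huIcc : u ∈ Icc (0:ℝ) σ := ⟨hu0.le, huτ.le.trans hτIcc.2⟩
      have hd : dist (φ u) z ≤ r := (hgood u hu0.le huτ).le.trans (by linarith)
      exact hbound (φ u) hd (g u) (hu huIcc)
    have hest : dist (φ τ) (φ 0) ≤ M * τ := hnormint τ hτIcc haeb
    have : dist (φ τ) z < r / 2 := by
      have h1 : M * τ ≤ r / 8 := by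
        calc M * τ ≤ M * σ := by nlinarith [hτIcc.2, hM]
        _ ≤ r / 8 := by linarith [hσM, mul_comm σ M]
      calc dist (φ τ) z ≤ dist (φ τ) (φ 0) + dist (φ 0) z := dist_triangle _ _ _
      _ ≤ r / 8 + r / 4 := by linarith [hest]
      _ < r / 2 := by linarith
    exact absurd hτmem.2 (not_le.2 this)
  refine ⟨main, fun s hs => ?_⟩
  refine hnormint s hs ?_
  filter_upwards [hae] with u hu huI
  rw [Set.uIoc_of_le hs.1] at huI
  have huIcc : u ∈ Icc (0:ℝ) σ := ⟨huI.1.le, huI.2.trans hs.2⟩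
  have hd : dist (φ u) z ≤ r := (main u huIcc).le.trans (by linarith)
  exact hbound (φ u) hd (g u) (hu huIcc)

/-- Any solution on `Ico 0 T` extends to `Icc 0 T`; hence forward-maximal solutions are global. -/
lemma maximal_global {F : Euc n → Set (Euc n)} {ε : Euc n → ℝ} {φ : ℝ → Euc n} {I : Set ℝ}
    (h : IsForwardMaximal F ε φ I) : I = Ici (0:ℝ) ∧ IsSolution F ε (Ici (0:ℝ)) φ := by
  rcases h with ⟨hI, hsol⟩ | ⟨T, hT, hI, hsol, hnot⟩
  · exact ⟨hI, hI ▸ hsol⟩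
  · subst hI
    exfalso
    apply hnot
    obtain ⟨g, hg, hid, hae⟩ := hsol
    have h0 : (0:ℝ) ∈ Ico (0:ℝ) T := ⟨le_refl 0, hT⟩
    refine ⟨fun t => if t = T then φ 0 + ∫ s in (0:ℝ)..T, g s else φ t, ?_, ?_⟩
    · refine isSolution_of_anchor (c := 0) ⟨le_refl 0, hT.le⟩ hg ?_ ?_
      · intro t ht
        by_cases htT : t = T
        · simp only [if_neg hT.ne, htT]
          simp
        · have htI : t ∈ Ico (0:ℝ) T := ⟨ht.1, lt_of_le_of_ne ht.2 htT⟩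
          simp only [if_neg htT, if_neg hT.ne]
          exact hid 0 h0 t htI

      · filter_upwards [hae, ae_ne_vol T] with s hs hsne hsI
        have hsI' : s ∈ Ico (0:ℝ) T := ⟨hsI.1, lt_of_le_of_ne hsI.2 hsne⟩
        simp only [if_neg hsne]
        exact hs hsI'
    · intro t ht
      simp [ht.2.ne]

/-- Time reversal: a solution of `−F` reversed is a solution of `F`. -/
lemma reverse_sol {F : Euc n → Set (Euc n)} {ε : Euc n → ℝ} {σ : ℝ} {φ : ℝ → Euc n}
    (hσ : 0 ≤ σ) (h : IsSolution (fun x => -F x) ε (Icc 0 σ) φ) :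
    IsSolution F ε (Icc 0 σ) (fun u => φ (σ - u)) := by
  obtain ⟨g, hg, hid, hae⟩ := h
  have hgt : LocallyIntegrable (fun u => -g (σ - u)) volume := by
    apply locallyIntegrable_of_forall
    intro a b
    have h2 : IntervalIntegrable (fun u => g (σ - u)) volume a b := by
      simpa [sub_sub_cancel] using
        (intervalIntegrable_of_locallyIntegrable hg (σ - a) (σ - b)).comp_sub_left σ
    exact h2.neg
  refine isSolution_of_anchor (c := 0) ⟨le_refl 0, hσ⟩ hgt ?_ ?_
  · intro t ht
    have hσI : σ ∈ Icc (0:ℝ) σ := ⟨hσ, le_refl σ⟩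
    have hσtI : σ - t ∈ Icc (0:ℝ) σ := ⟨by linarith [ht.2], by linarith [ht.1]⟩
    have h1 : φ (σ - t) = φ σ + ∫ s in σ..(σ - t), g s := hid σ hσI (σ - t) hσtI
    have h2 : (∫ u in (0:ℝ)..t, -g (σ - u)) = -∫ u in (0:ℝ)..t, g (σ - u) :=
      intervalIntegral.integral_neg
    have h3 : (∫ u in (0:ℝ)..t, g (σ - u)) = ∫ s in (σ - t)..(σ - 0), g s :=
      intervalIntegral.integral_comp_sub_left g σ
    have h4 : (∫ s in σ..(σ - t), g s) = -∫ s in (σ - t)..σ, g s :=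
      intervalIntegral.integral_symm _ _
    simp only [sub_zero] at h3 ⊢
    rw [h1, h4, h2, h3]
  · have hae2 := ae_comp_const_sub hae σ
    filter_upwards [hae2] with u hu huI
    have : σ - u ∈ Icc (0:ℝ) σ := ⟨by linarith [huI.2], by linarith [huI.1]⟩
    obtain ⟨a, ha, b, hb, hab⟩ := hu this
    rw [Set.mem_neg] at ha
    refine ⟨-a, ha, -b, by simpa using hb, by rw [← hab]; show -a + -b = -(a + b); abel⟩

lemma concat {F : Euc n → Set (Euc n)} {εb : Euc n → ℝ} {τ σ : ℝ} (hτ : 0 ≤ τ) (hσ : 0 ≤ σ)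
    {χ ψ : ℝ → Euc n} (hχ : IsSolution F εb (Icc 0 τ) χ) (hψ : IsSolution F εb (Icc 0 σ) ψ)
    (hj : ψ 0 = χ τ) :
    ∃ Φ : ℝ → Euc n, IsSolution F εb (Icc 0 (τ + σ)) Φ ∧ Φ 0 = χ 0 ∧ Φ (τ + σ) = ψ σ := by
  obtain ⟨gχ, hgχ, hidχ, haeχ⟩ := hχ
  obtain ⟨gψ, hgψ, hidψ, haeψ⟩ := hψ
  set Φ : ℝ → Euc n := fun t => if t ≤ τ then χ t else ψ (t - τ) with hΦdef
  set G : ℝ → Euc n := fun t => if t < τ then gχ t else gψ (t - τ) with hGdef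
  have hΦ0 : Φ 0 = χ 0 := by simp [hΦdef, hτ]
  have hgψτ : LocallyIntegrable (fun t => gψ (t - τ)) volume := by
    apply locallyIntegrable_of_forall
    intro a b
    have := (intervalIntegrable_of_locallyIntegrable hgψ (a - τ) (b - τ)).comp_sub_right τ
    simpa using this
  have hG : LocallyIntegrable G volume := by
    have : G = (Iio τ).indicator gχ + (Ici τ).indicator (fun t => gψ (t - τ)) := by
      funext t
      by_cases htτ : t < τ
      · simp [hGdef, htτ, Set.indicator_of_mem (show t ∈ Iio τ from htτ),
          Set.indicator_of_notMem (show t ∉ Ici τ from not_le.2 htτ)]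
      · simp [hGdef, htτ, Set.indicator_of_notMem (show t ∉ Iio τ from htτ),
          Set.indicator_of_mem (show t ∈ Ici τ from not_lt.1 htτ)]
    rw [this]
    exact (hgχ.indicator measurableSet_Iio).add (hgψτ.indicator measurableSet_Ici)
  have h0τ : (0:ℝ) ∈ Icc 0 τ := ⟨le_refl 0, hτ⟩
  have h0σ : (0:ℝ) ∈ Icc 0 σ := ⟨le_refl 0, hσ⟩
  have hint1 : ∀ t : ℝ, t ≤ τ → (∫ s in (0:ℝ)..t, G s) = ∫ s in (0:ℝ)..t, gχ s := by
    intro t ht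
    apply intervalIntegral.integral_congr_ae
    filter_upwards [ae_ne_vol τ] with u hu huI
    rw [Set.uIoc] at huI
    have hle : u ≤ τ := huI.2.trans (max_le hτ ht)
    have : u < τ := lt_of_le_of_ne hle hu
    simp [hGdef, this]
  have hint2 : ∀ t : ℝ, τ < t → (∫ s in τ..t, G s) = ∫ s in (0:ℝ)..(t - τ), gψ s := by
    intro t ht
    have h1 : (∫ s in τ..t, G s) = ∫ s in τ..t, gψ (s - τ) := by
      apply intervalIntegral.integral_congr_ae
      filter_upwards with u huI
      rw [Set.uIoc_of_le ht.le] at huI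
      have : ¬ u < τ := not_lt.2 huI.1.le
      simp [hGdef, this]
    have h2 : (∫ s in τ..t, gψ (s - τ)) = ∫ s in (τ - τ)..(t - τ), gψ s :=
      intervalIntegral.integral_comp_sub_right gψ τ
    rw [h1, h2, sub_self]
  have hΦend : Φ (τ + σ) = ψ σ := by
    by_cases h : τ + σ ≤ τ
    · have hσ0 : σ = 0 := le_antisymm (by linarith) hσ
      simp [hΦdef, h, hσ0, hj]
    · simp only [hΦdef, if_neg h, show τ + σ - τ = σ by ring]
  refine ⟨Φ, ?_, hΦ0, hΦend⟩
  refine isSolution_of_anchor (c := 0) ⟨le_refl 0, by linarith⟩ hG ?_ ?_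
  · intro t ht
    rw [hΦ0]
    by_cases htτ : t ≤ τ
    · have : Φ t = χ t := by simp [hΦdef, htτ]
      rw [this, hint1 t htτ]
      exact hidχ 0 h0τ t ⟨ht.1, htτ⟩
    · push_neg at htτ
      have hΦt : Φ t = ψ (t - τ) := by simp [hΦdef, not_le.2 htτ]
      have htσ : t - τ ∈ Icc (0:ℝ) σ := ⟨by linarith, by linarith [ht.2]⟩
      have hsplit : (∫ s in (0:ℝ)..t, G s) = (∫ s in (0:ℝ)..τ, G s) + ∫ s in τ..t, G s :=
        (intervalIntegral.integral_add_adjacent_intervals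
          (intervalIntegrable_of_locallyIntegrable hG _ _)
          (intervalIntegrable_of_locallyIntegrable hG _ _)).symm
      rw [hΦt, hsplit, hint1 τ (le_refl τ), hint2 t htτ]
      have e1 : ψ (t - τ) = ψ 0 + ∫ s in (0:ℝ)..(t - τ), gψ s := hidψ 0 h0σ _ htσ
      have e2 : χ τ = χ 0 + ∫ s in (0:ℝ)..τ, gχ s := hidχ 0 h0τ τ ⟨hτ, le_refl τ⟩
      rw [e1, hj, e2]
      abel
  · filter_upwards [haeχ, ae_comp_sub_right haeψ τ, ae_ne_vol τ] with u huχ huψ hune huI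
    by_cases huτ : u < τ
    · have h1 : Φ u = χ u := by simp [hΦdef, huτ.le]
      have h2 : G u = gχ u := by simp [hGdef, huτ]
      rw [h1, h2]
      exact huχ ⟨huI.1, huτ.le⟩
    · push_neg at huτ
      have huτ' : τ < u := lt_of_le_of_ne huτ (Ne.symm hune)
      have h1 : Φ u = ψ (u - τ) := by simp [hΦdef, not_le.2 huτ']
      have h2 : G u = gψ (u - τ) := by simp [hGdef, not_lt.2 huτ]
      rw [h1, h2]
      exact huψ ⟨by linarith, by linarith [huI.2]⟩

lemma reach_extend {F : Euc n → Set (Euc n)} {εb : Euc n → ℝ} {Xo : Set (Euc n)} {σ : ℝ}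
    (hσ : 0 ≤ σ) {ψ : ℝ → Euc n} {y : Euc n} (hy : y ∈ Reach F εb Xo)
    (hψ : IsSolution F εb (Icc 0 σ) ψ) (h0 : ψ 0 = y) : ψ σ ∈ Reach F εb Xo := by
  obtain ⟨τ, hτ, χ, hχ, hXo, hend⟩ := hy
  obtain ⟨Φ, hΦ, h1, h2⟩ := concat hτ hσ hχ hψ (h0.trans hend.symm)
  exact ⟨τ + σ, by linarith, Φ, hΦ, h1 ▸ hXo, h2⟩

set_option maxHeartbeats 1000000 in
/-- Linear interpolation perturbation of a solution-like curve. -/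
lemma perturb_sol {F : Euc n → Set (Euc n)} {εb : Euc n → ℝ} {σ : ℝ} (hσ : 0 < σ)
    {φ : ℝ → Euc n} {g : ℝ → Euc n} (hg : LocallyIntegrable g volume)
    (hid : ∀ t ∈ Icc (0:ℝ) σ, φ t = φ 0 + ∫ s in (0:ℝ)..t, g s)
    (a b : Euc n)
    (hae : ∀ᵐ s ∂volume, s ∈ Icc (0:ℝ) σ →
      g s + σ⁻¹ • (b - a) ∈ F (φ s + ((σ - s)/σ) • a + (s/σ) • b) +
        Metric.closedBall (0 : Euc n) (εb (φ s + ((σ - s)/σ) • a + (s/σ) • b))) :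
    IsSolution F εb (Icc 0 σ) (fun s => φ s + ((σ - s)/σ) • a + (s/σ) • b) := by
  refine isSolution_of_anchor (c := 0) ⟨le_refl 0, hσ.le⟩
    (hg.add (locallyIntegrable_const (σ⁻¹ • (b - a)))) ?_ ?_
  · intro t ht
    have hint : (∫ s in (0:ℝ)..t, g s) = φ t - φ 0 := by rw [hid t ht]; abel
    have hIint : (∫ s in (0:ℝ)..t, (g s + σ⁻¹ • (b - a))) =
        (φ t - φ 0) + (t/σ) • (b - a) := by
      rw [intervalIntegral.integral_add (intervalIntegrable_of_locallyIntegrable hg _ _)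
        intervalIntegrable_const, intervalIntegral.integral_const, sub_zero, hint,
        smul_smul, ← div_eq_mul_inv]
    simp only [Pi.add_apply]
    rw [hIint]
    have e1 : ((σ - (0:ℝ))/σ) • a = a := by
      rw [sub_zero, div_self hσ.ne', one_smul]
    have e2 : ((0:ℝ)/σ) • b = (0:Euc n) := by rw [zero_div, zero_smul]
    rw [e1, e2]
    have e3 : ((σ - t)/σ) • a = a - (t/σ) • a := by
      rw [sub_div, div_self hσ.ne', sub_smul, one_smul]
    have e4 : ((t:ℝ)/σ) • (b - a) = (t/σ) • b - (t/σ) • a := smul_sub _ _ _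
    rw [e3, e4]
    abel
  · filter_upwards [hae] with s hs hsI
    simpa only [Pi.add_apply] using hs hsI

set_option maxHeartbeats 1000000 in
lemma ML {F : Euc n → Set (Euc n)} {ε₁ εbar : Euc n → ℝ} {Xo : Set (Euc n)}
    (hUSC : USC F) (hLSC : LSC F) (hVal : NCCValues F)
    (hε₁ : Continuous ε₁) (hεbar : Continuous εbar)
    (hlt : ∀ x, 0 < ε₁ x ∧ ε₁ x < εbar x) (z : Euc n) :
    ∃ r ρ σ : ℝ, 0 < r ∧ 0 < ρ ∧ ρ ≤ r/16 ∧ ρ ≤ 1/2 ∧ 0 < σ ∧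
      ∀ ε : Euc n → ℝ, (∀ x, 0 ≤ ε x ∧ ε x ≤ ε₁ x) →
        (∀ φ : ℝ → Euc n, IsSolution F ε (Icc 0 σ) φ → dist (φ 0) z ≤ r/4 →
          (∃ z' ∈ Reach F εbar Xo, dist (φ 0) z' ≤ 2*ρ) →
          Metric.closedBall (φ σ) ρ ⊆ Reach F εbar Xo) ∧
        (∀ φ : ℝ → Euc n, IsSolution (fun x => -F x) ε (Icc 0 σ) φ → dist (φ 0) z ≤ r/4 →
          dist (φ σ) z ≤ dist (φ 0) z + r/8) := by
  set γ := εbar z - ε₁ z with hγdef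
  have hγ : 0 < γ := sub_pos.2 (hlt z).2
  obtain ⟨δb, hδb, hUSCz⟩ := hUSC z (γ/8) (by positivity)
  -- uniform lower semicontinuity at z
  have hLSCu : ∃ δ > (0:ℝ), ∀ y : Euc n, ‖y - z‖ < δ → ∀ v ∈ F z,
      ∃ w ∈ F y, ‖w - v‖ ≤ γ/8 := by
    have hcpt := (hVal z).2.1
    have hne := (hVal z).1
    have hch : ∀ v : Euc n, ∃ δ, 0 < δ ∧ (v ∈ F z → ∀ y : Euc n, ‖y - z‖ < δ →
        ∃ w ∈ F y, ‖w - v‖ ≤ γ/16) := by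
      intro v
      by_cases hv : v ∈ F z
      · obtain ⟨δ, hδ, h⟩ := hLSC z v hv (γ/16) (by positivity)
        exact ⟨δ, hδ, fun _ => h⟩
      · exact ⟨1, one_pos, fun h => absurd h hv⟩
    choose δv hδv hPv using hch
    obtain ⟨t, htsub, hcover⟩ := hcpt.elim_nhds_subcover (fun v => Metric.ball v (γ/16))
      (fun v _ => Metric.ball_mem_nhds v (by positivity))
    have hte : t.Nonempty := by
      rcases hne with ⟨v, hv⟩
      have := hcover hv
      rw [Set.mem_iUnion₂] at this
      obtain ⟨v₀, hv₀, _⟩ := this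
      exact ⟨v₀, hv₀⟩
    refine ⟨t.inf' hte δv, (Finset.lt_inf'_iff hte).2 (fun v _ => hδv v), ?_⟩
    intro y hy v hv
    have := hcover hv
    rw [Set.mem_iUnion₂] at this
    obtain ⟨v₀, hv₀t, hv₀⟩ := this
    have hyv₀ : ‖y - z‖ < δv v₀ := lt_of_lt_of_le hy (Finset.inf'_le δv hv₀t)
    obtain ⟨w, hw, hwv₀⟩ := hPv v₀ (htsub v₀ hv₀t) y hyv₀
    refine ⟨w, hw, ?_⟩
    have h1 : ‖v - v₀‖ < γ/16 := by
      rw [← dist_eq_norm]; exact Metric.mem_ball.1 hv₀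
    calc ‖w - v‖ = ‖(w - v₀) + (v₀ - v)‖ := by rw [sub_add_sub_cancel]
      _ ≤ ‖w - v₀‖ + ‖v₀ - v‖ := norm_add_le _ _
      _ ≤ γ/16 + γ/16 := add_le_add hwv₀ (by rw [norm_sub_rev]; exact h1.le)
      _ = γ/8 := by ring
  obtain ⟨δc, hδc, hLSCz⟩ := hLSCu
  -- continuity of ε₁, εbar at z
  have hconta : ∃ δ > (0:ℝ), ∀ y : Euc n, dist y z < δ →
      ε₁ y ≤ ε₁ z + γ/8 ∧ εbar z - γ/8 ≤ εbar y := by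
    obtain ⟨δ1, hδ1, hd1⟩ := Metric.continuousAt_iff.1 hε₁.continuousAt (γ/8) (by positivity)
    obtain ⟨δ2, hδ2, hd2⟩ := Metric.continuousAt_iff.1 hεbar.continuousAt (γ/8) (by positivity)
    refine ⟨min δ1 δ2, lt_min hδ1 hδ2, fun y hy => ?_⟩
    have e1 := hd1 (lt_of_lt_of_le hy (min_le_left _ _))
    have e2 := hd2 (lt_of_lt_of_le hy (min_le_right _ _))
    rw [Real.dist_eq] at e1 e2
    exact ⟨by linarith [(abs_lt.1 e1).2], by linarith [(abs_lt.1 e2).1]⟩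
  obtain ⟨δa, hδa, hcont⟩ := hconta
  obtain ⟨R, hR⟩ := (hVal z).2.1.isBounded.subset_closedBall 0
  have hMz : ∀ v ∈ F z, ‖v‖ ≤ max R 0 := by
    intro v hv
    have := hR hv
    rw [Metric.mem_closedBall, dist_zero_right] at this
    exact this.trans (le_max_left _ _)
  set Mz := max R 0 with hMzdef
  have hMz0 : 0 ≤ Mz := le_max_right _ _
  set r := min (min δb δc) δa / 2 with hrdef
  have hr : 0 < r := by positivity
  have hrb : r < δb := by
    have h := le_trans (min_le_left (min δb δc) δa) (min_le_left δb δc)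
    rw [hrdef]; linarith
  have hrc : r < δc := by
    have h := le_trans (min_le_left (min δb δc) δa) (min_le_right δb δc)
    rw [hrdef]; linarith
  have hra : r < δa := by
    have h := min_le_right (min δb δc) δa
    rw [hrdef]; linarith
  set M := Mz + ε₁ z + γ with hMdef
  have hM : 0 < M := by
    have := (hlt z).1
    rw [hMdef]; linarith
  set σ := r / (8 * M) with hσdef
  have hσ : 0 < σ := by positivity
  have hσM : σ * M = r / 8 := by
    rw [hσdef]; field_simp
  set ρ := min (min (σ * γ / 16) (r / 16)) (1/2) with hρdef
  have hρ : 0 < ρ := by positivity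
  have hρr : ρ ≤ r / 16 := le_trans (min_le_left _ _) (min_le_right _ _)
  have hρσγ : ρ ≤ σ * γ / 16 := le_trans (min_le_left _ _) (min_le_left _ _)
  have hρhalf : ρ ≤ 1/2 := min_le_right _ _
  refine ⟨r, ρ, σ, hr, hρ, hρr, hρhalf, hσ, ?_⟩
  intro ε hε
  have hUSC' : ∀ y : Euc n, dist y z ≤ r → ∀ w ∈ F y, ∃ v₀ ∈ F z, ‖w - v₀‖ ≤ γ/8 := by
    intro y hy w hw
    have hyz : ‖y - z‖ < δb := by
      rw [← dist_eq_norm]; exact lt_of_le_of_lt hy hrb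
    exact hUSCz y hyz hw
  have hLSC' : ∀ y : Euc n, dist y z ≤ 3*r/4 → ∀ v ∈ F z, ∃ w ∈ F y, ‖w - v‖ ≤ γ/8 := by
    intro y hy v hv
    have hyz : ‖y - z‖ < δc := by
      rw [← dist_eq_norm]; linarith
    exact hLSCz y hyz v hv
  have hcont' : ∀ y : Euc n, dist y z ≤ r → ε₁ y ≤ ε₁ z + γ/8 ∧ εbar z - γ/8 ≤ εbar y :=
    fun y hy => hcont y (by linarith)
  have hboundF : ∀ y : Euc n, dist y z ≤ r →
      ∀ v ∈ F y + Metric.closedBall (0 : Euc n) (ε y), ‖v‖ ≤ M := by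
    intro y hy v hv
    rw [Set.mem_add] at hv
    obtain ⟨w, hw, c, hc, hwc⟩ := hv
    obtain ⟨v₀, hv₀, hwv₀⟩ := hUSC' y hy w hw
    rw [Metric.mem_closedBall, dist_zero_right] at hc
    have h1 : ‖w‖ ≤ Mz + γ/8 := by
      calc ‖w‖ = ‖v₀ + (w - v₀)‖ := by rw [add_sub_cancel]
        _ ≤ ‖v₀‖ + ‖w - v₀‖ := norm_add_le _ _
        _ ≤ Mz + γ/8 := add_le_add (hMz v₀ hv₀) hwv₀
    have h2 : ‖c‖ ≤ ε₁ z + γ/8 :=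
      le_trans hc (le_trans (hε y).2 (hcont' y hy).1)
    calc ‖v‖ = ‖w + c‖ := by rw [hwc]
      _ ≤ ‖w‖ + ‖c‖ := norm_add_le _ _
      _ ≤ M := by rw [hMdef]; linarith
  have hboundFneg : ∀ y : Euc n, dist y z ≤ r →
      ∀ v ∈ (fun x => -F x) y + Metric.closedBall (0 : Euc n) (ε y), ‖v‖ ≤ M := by
    intro y hy v hv
    rw [Set.mem_add] at hv
    obtain ⟨w, hw, c, hc, hwc⟩ := hv
    rw [Set.mem_neg] at hw
    obtain ⟨v₀, hv₀, hwv₀⟩ := hUSC' y hy (-w) hw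
    rw [Metric.mem_closedBall, dist_zero_right] at hc
    have h1 : ‖w‖ ≤ Mz + γ/8 := by
      rw [← norm_neg w]
      calc ‖-w‖ = ‖v₀ + (-w - v₀)‖ := by rw [add_sub_cancel]
        _ ≤ ‖v₀‖ + ‖-w - v₀‖ := norm_add_le _ _
        _ ≤ Mz + γ/8 := add_le_add (hMz v₀ hv₀) hwv₀
    have h2 : ‖c‖ ≤ ε₁ z + γ/8 :=
      le_trans hc (le_trans (hε y).2 (hcont' y hy).1)
    calc ‖v‖ = ‖w + c‖ := by rw [hwc]
      _ ≤ ‖w‖ + ‖c‖ := norm_add_le _ _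
      _ ≤ M := by rw [hMdef]; linarith
  constructor
  · -- part 1
    intro φ hsol h0 hK y hy
    obtain ⟨z', hz'K, hz'd⟩ := hK
    have hspeed := speed_bound hr hM.le hσ hσM.le hboundF hsol h0
    have hin : ∀ s ∈ Icc (0:ℝ) σ, dist (φ s) z < r/2 := hspeed.1
    obtain ⟨g, hg, hid, hae⟩ := hsol
    have hid0 : ∀ t ∈ Icc (0:ℝ) σ, φ t = φ 0 + ∫ s in (0:ℝ)..t, g s :=
      fun t ht => hid 0 ⟨le_refl 0, hσ.le⟩ t ht
    have hbn : ‖y - φ σ‖ ≤ ρ := by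
      rw [← dist_eq_norm]
      exact Metric.mem_closedBall.1 hy
    have han : ‖z' - φ 0‖ ≤ 2*ρ := by
      rw [← dist_eq_norm, dist_comm]
      exact hz'd
    have hun : ‖σ⁻¹ • ((y - φ σ) - (z' - φ 0))‖ ≤ γ/4 := by
      have h1 : ‖(y - φ σ) - (z' - φ 0)‖ ≤ 3*ρ := by
        calc ‖(y - φ σ) - (z' - φ 0)‖ ≤ ‖y - φ σ‖ + ‖z' - φ 0‖ := norm_sub_le _ _
          _ ≤ 3*ρ := by linarith
      rw [norm_smul, norm_inv, Real.norm_eq_abs, abs_of_pos hσ]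
      rw [inv_mul_le_iff₀ hσ]
      calc ‖(y - φ σ) - (z' - φ 0)‖ ≤ 3*ρ := h1
        _ ≤ 3 * (σ * γ / 16) := by linarith
        _ ≤ σ * (γ/4) := by nlinarith
    have hcoefb : ∀ s ∈ Icc (0:ℝ) σ,
        ‖((σ - s)/σ) • (z' - φ 0) + (s/σ) • (y - φ σ)‖ ≤ 3*ρ := by
      intro s hs
      have hc1 : |(σ - s)/σ| ≤ 1 := by
        rw [abs_div, abs_of_pos hσ, div_le_one hσ,
          abs_of_nonneg (by linarith [hs.2] : (0:ℝ) ≤ σ - s)]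
        linarith [hs.1]
      have hc2 : |s/σ| ≤ 1 := by
        rw [abs_div, abs_of_pos hσ, div_le_one hσ, abs_of_nonneg hs.1]
        exact hs.2
      calc ‖((σ - s)/σ) • (z' - φ 0) + (s/σ) • (y - φ σ)‖
          ≤ ‖((σ - s)/σ) • (z' - φ 0)‖ + ‖(s/σ) • (y - φ σ)‖ := norm_add_le _ _
        _ = |(σ - s)/σ| * ‖z' - φ 0‖ + |s/σ| * ‖y - φ σ‖ := by
            rw [norm_smul, norm_smul, Real.norm_eq_abs, Real.norm_eq_abs]
        _ ≤ 1 * (2*ρ) + 1 * ρ := add_le_add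
            (mul_le_mul hc1 han (norm_nonneg _) zero_le_one)
            (mul_le_mul hc2 hbn (norm_nonneg _) zero_le_one)
        _ = 3*ρ := by ring
    have haeψ : ∀ᵐ s ∂(volume : Measure ℝ), s ∈ Icc (0:ℝ) σ →
        g s + σ⁻¹ • ((y - φ σ) - (z' - φ 0)) ∈
          F (φ s + ((σ - s)/σ) • (z' - φ 0) + (s/σ) • (y - φ σ)) +
          Metric.closedBall (0 : Euc n)
            (εbar (φ s + ((σ - s)/σ) • (z' - φ 0) + (s/σ) • (y - φ σ))) := by
      filter_upwards [hae] with s hs hsI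
      have hgs := hs hsI
      rw [Set.mem_add] at hgs
      obtain ⟨w, hw, cc, hcc, hwcc⟩ := hgs
      rw [Metric.mem_closedBall, dist_zero_right] at hcc
      have hφs : dist (φ s) z < r/2 := hin s hsI
      have hqφ : ‖(φ s + ((σ - s)/σ) • (z' - φ 0) + (s/σ) • (y - φ σ)) - φ s‖ ≤ 3*ρ := by
        have : (φ s + ((σ - s)/σ) • (z' - φ 0) + (s/σ) • (y - φ σ)) - φ s
            = ((σ - s)/σ) • (z' - φ 0) + (s/σ) • (y - φ σ) := by abel
        rw [this]
        exact hcoefb s hsI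
      have hqz : dist (φ s + ((σ - s)/σ) • (z' - φ 0) + (s/σ) • (y - φ σ)) z ≤ 3*r/4 := by
        calc dist (φ s + ((σ - s)/σ) • (z' - φ 0) + (s/σ) • (y - φ σ)) z
            ≤ dist (φ s + ((σ - s)/σ) • (z' - φ 0) + (s/σ) • (y - φ σ)) (φ s)
              + dist (φ s) z := dist_triangle _ _ _
          _ ≤ 3*ρ + r/2 := add_le_add (by rw [dist_eq_norm]; exact hqφ) hφs.le
          _ ≤ 3*r/4 := by linarith [hρr]
      obtain ⟨v₀, hv₀, hwv₀⟩ := hUSC' (φ s) (by linarith) w hw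
      obtain ⟨w₂, hw₂, hw₂v₀⟩ :=
        hLSC' (φ s + ((σ - s)/σ) • (z' - φ 0) + (s/σ) • (y - φ σ)) hqz v₀ hv₀
      rw [Set.mem_add]
      refine ⟨w₂, hw₂, (g s + σ⁻¹ • ((y - φ σ) - (z' - φ 0))) - w₂, ?_, by abel⟩
      rw [Metric.mem_closedBall, dist_zero_right]
      have hres : (g s + σ⁻¹ • ((y - φ σ) - (z' - φ 0))) - w₂
          = (w - w₂) + cc + σ⁻¹ • ((y - φ σ) - (z' - φ 0)) := by rw [← hwcc]; abel
      have h1 : ‖w - w₂‖ ≤ γ/4 := by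
        calc ‖w - w₂‖ = ‖(w - v₀) + (v₀ - w₂)‖ := by rw [sub_add_sub_cancel]
          _ ≤ ‖w - v₀‖ + ‖v₀ - w₂‖ := norm_add_le _ _
          _ ≤ γ/8 + γ/8 := add_le_add hwv₀ (by rw [norm_sub_rev]; exact hw₂v₀)
          _ = γ/4 := by ring
      have h2 : ‖cc‖ ≤ ε₁ z + γ/8 :=
        le_trans hcc (le_trans (hε (φ s)).2 (hcont' (φ s) (by linarith)).1)
      have h3 : εbar z - γ/8
          ≤ εbar (φ s + ((σ - s)/σ) • (z' - φ 0) + (s/σ) • (y - φ σ)) :=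
        (hcont' _ (by linarith)).2
      calc ‖(g s + σ⁻¹ • ((y - φ σ) - (z' - φ 0))) - w₂‖
          = ‖(w - w₂) + cc + σ⁻¹ • ((y - φ σ) - (z' - φ 0))‖ := by rw [hres]
        _ ≤ ‖(w - w₂) + cc‖ + ‖σ⁻¹ • ((y - φ σ) - (z' - φ 0))‖ := norm_add_le _ _
        _ ≤ ‖w - w₂‖ + ‖cc‖ + ‖σ⁻¹ • ((y - φ σ) - (z' - φ 0))‖ := by
            linarith [norm_add_le (w - w₂) cc]
        _ ≤ γ/4 + (ε₁ z + γ/8) + γ/4 := by linarith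
        _ ≤ εbar (φ s + ((σ - s)/σ) • (z' - φ 0) + (s/σ) • (y - φ σ)) := by
            have hez : εbar z = ε₁ z + γ := by rw [hγdef]; ring
            linarith
    have hψsol := perturb_sol hσ hg hid0 (z' - φ 0) (y - φ σ) haeψ
    have hψ0 : (fun s => φ s + ((σ - s)/σ) • (z' - φ 0) + (s/σ) • (y - φ σ)) 0 = z' := by
      simp only [sub_zero, div_self hσ.ne', one_smul, zero_div, zero_smul, add_zero]
      abel
    have hψσ : (fun s => φ s + ((σ - s)/σ) • (z' - φ 0) + (s/σ) • (y - φ σ)) σ = y := by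
      simp only [sub_self, zero_div, zero_smul, div_self hσ.ne', one_smul, add_zero, zero_add]
      abel
    have hmem := reach_extend hσ.le hz'K hψsol hψ0
    simp only [] at hmem hψσ
    rwa [hψσ] at hmem
  · -- part 2
    intro φ hsol h0
    have hspeed := speed_bound hr hM.le hσ hσM.le hboundFneg hsol h0
    have h2 := hspeed.2 σ ⟨hσ.le, le_refl σ⟩
    have h3 : M * σ = r/8 := by rw [mul_comm]; exact hσM
    calc dist (φ σ) z ≤ dist (φ σ) (φ 0) + dist (φ 0) z := dist_triangle _ _ _
      _ ≤ dist (φ 0) z + r/8 := by rw [← h3]; linarith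

end L9

/-- Lemma 9: local recurrence of the reachable set. -/
theorem lemma9_local_recurrence {n : ℕ} (hn : 1 ≤ n)
    (F : Euc n → Set (Euc n))
    (hFC : ForwardComplete F) (hUSC : USC F) (hLSC : LSC F) (hVal : NCCValues F)
    (Xo : Set (Euc n)) (ε₁ εbar : Euc n → ℝ)
    (hε₁ : Continuous ε₁) (hεbar : Continuous εbar)
    (hlt : ∀ x, 0 < ε₁ x ∧ ε₁ x < εbar x) :
    ∃ U₁ : Set (Euc n), IsClosed U₁ ∧
      frontier (Reach F εbar Xo) ⊆ interior U₁ ∧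
      ∀ ε : Euc n → ℝ, Continuous ε → (∀ x, 0 < ε x ∧ ε x ≤ ε₁ x) →
        LocallyRecurrent F ε (Reach F εbar Xo) U₁ ∧
        LocallyRecurrent (fun x => -F x) ε (Reach F εbar Xo)ᶜ U₁ := by
  classical
  set K := Reach F εbar Xo with hKdef
  obtain ⟨rf, ρf, σf, hrf, hρf, hρr, hρhalf, hσf, hprop⟩ :
      ∃ rf ρf σf : Euc n → ℝ, (∀ z, 0 < rf z) ∧ (∀ z, 0 < ρf z) ∧
        (∀ z, ρf z ≤ rf z / 16) ∧ (∀ z, ρf z ≤ 1/2) ∧ (∀ z, 0 < σf z) ∧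
        ∀ z, ∀ ε : Euc n → ℝ, (∀ x, 0 ≤ ε x ∧ ε x ≤ ε₁ x) →
          (∀ φ : ℝ → Euc n, IsSolution F ε (Icc 0 (σf z)) φ → dist (φ 0) z ≤ rf z/4 →
            (∃ z' ∈ K, dist (φ 0) z' ≤ 2*ρf z) →
            Metric.closedBall (φ (σf z)) (ρf z) ⊆ K) ∧
          (∀ φ : ℝ → Euc n, IsSolution (fun x => -F x) ε (Icc 0 (σf z)) φ →
            dist (φ 0) z ≤ rf z/4 → dist (φ (σf z)) z ≤ dist (φ 0) z + rf z/8) := by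
    have h := fun z : Euc n => L9.ML (Xo := Xo) hUSC hLSC hVal hε₁ hεbar hlt z
    choose rf ρf σf h1 h2 h3 h4 h5 h6 using h
    exact ⟨rf, ρf, σf, h1, h2, h3, h4, h5, h6⟩
  set Z := frontier K with hZdef
  have hZclosed : IsClosed Z := isClosed_frontier
  -- compact pieces and finite subcovers
  set C : ℕ → Set (Euc n) :=
    fun m => Z ∩ (Metric.closedBall 0 (m+1) \ Metric.ball 0 m) with hCdef
  have hCcpt : ∀ m, IsCompact (C m) := by
    intro m
    have hclosed : IsClosed (C m) :=
      hZclosed.inter (Metric.isClosed_closedBall.inter (Metric.isOpen_ball.isClosed_compl))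
    exact (isCompact_closedBall (0 : Euc n) (m+1)).of_isClosed_subset hclosed
      (fun x hx => hx.2.1)
  have hcov : ∀ m, ∃ T : Finset (Euc n), (∀ x ∈ T, x ∈ C m) ∧
      C m ⊆ ⋃ z ∈ T, Metric.ball z (ρf z / 2) := by
    intro m
    exact (hCcpt m).elim_nhds_subcover (fun z => Metric.ball z (ρf z / 2))
      (fun z _ => Metric.ball_mem_nhds z (by linarith [hρf z]))
  choose T hTsub hTcov using hcov
  set U₁ : Set (Euc n) := ⋃ m : ℕ, ⋃ z ∈ T m, Metric.closedBall z (ρf z / 2) with hU₁def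
  have hfc : ∀ m : ℕ, IsClosed (⋃ z ∈ T m, Metric.closedBall z (ρf z / 2)) := by
    intro m
    exact (T m).finite_toSet.isClosed_biUnion (fun z _ => Metric.isClosed_closedBall)
  have hlf : LocallyFinite (fun m : ℕ => ⋃ z ∈ T m, Metric.closedBall z (ρf z / 2)) := by
    intro x
    refine ⟨Metric.ball x 1, Metric.ball_mem_nhds x one_pos, ?_⟩
    have hsub : {m : ℕ | ((⋃ z ∈ T m, Metric.closedBall z (ρf z / 2)) ∩
        Metric.ball x 1).Nonempty} ⊆ {m : ℕ | (m:ℝ) ≤ ‖x‖ + 2} := by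
      intro m hm
      obtain ⟨y, hy1, hy2⟩ := hm
      rw [Set.mem_iUnion₂] at hy1
      obtain ⟨zc, hzcT, hzc⟩ := hy1
      have hzcC : zc ∈ C m := hTsub m zc hzcT
      have hm1 : (m:ℝ) ≤ ‖zc‖ := by
        have := hzcC.2.2
        rw [Metric.mem_ball, dist_zero_right] at this
        exact not_lt.1 this
      have hd1 : dist y zc ≤ 1/4 := by
        have := Metric.mem_closedBall.1 hzc
        linarith [hρhalf zc]
      have hd2 : dist y x < 1 := Metric.mem_ball.1 hy2
      have : ‖zc‖ ≤ ‖x‖ + dist zc x := by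
        calc ‖zc‖ = dist zc 0 := by rw [dist_zero_right]
          _ ≤ dist zc x + dist x 0 := dist_triangle _ _ _
          _ = ‖x‖ + dist zc x := by rw [dist_zero_right]; ring
      have hzx : dist zc x ≤ dist zc y + dist y x := dist_triangle _ _ _
      rw [Set.mem_setOf_eq]
      have : dist zc y = dist y zc := dist_comm _ _
      linarith [hzx, hd1, hd2, hm1]
    refine Set.Finite.subset (Set.finite_Iic (⌈‖x‖ + 2⌉₊)) ?_
    intro m hm
    have := hsub hm
    rw [Set.mem_setOf_eq] at this
    rw [Set.mem_Iic]
    have h2 : ((m:ℕ):ℝ) ≤ (⌈‖x‖ + 2⌉₊ : ℝ) := le_trans this (Nat.le_ceil _)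
    exact_mod_cast h2
  have hU₁closed : IsClosed U₁ := hlf.isClosed_iUnion hfc
  have hfrontier : Z ⊆ interior U₁ := by
    intro z hz
    set m := ⌊‖z‖⌋₊ with hmdef
    have hzC : z ∈ C m := by
      refine ⟨hz, ?_, ?_⟩
      · rw [Metric.mem_closedBall, dist_zero_right]
        have := Nat.lt_floor_add_one ‖z‖
        push_cast
        linarith
      · rw [Metric.mem_ball, dist_zero_right]
        exact not_lt.2 (Nat.floor_le (norm_nonneg z))
    have hzO := hTcov m hzC
    refine mem_interior.2 ⟨⋃ c ∈ T m, Metric.ball c (ρf c / 2), ?_, ?_, hzO⟩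
    · intro y hy
      rw [Set.mem_iUnion₂] at hy
      obtain ⟨c, hcT, hc⟩ := hy
      exact Set.mem_iUnion.2 ⟨m, Set.mem_iUnion₂.2 ⟨c, hcT, Metric.ball_subset_closedBall hc⟩⟩
    · exact isOpen_biUnion (fun c _ => Metric.isOpen_ball)
  have hU₁mem : ∀ x ∈ U₁, ∃ zc, zc ∈ Z ∧ dist x zc ≤ ρf zc / 2 := by
    intro x hx
    rw [hU₁def, Set.mem_iUnion] at hx
    obtain ⟨m, hm⟩ := hx
    rw [Set.mem_iUnion₂] at hm
    obtain ⟨zc, hzcT, hzc⟩ := hm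
    exact ⟨zc, (hTsub m zc hzcT).1, Metric.mem_closedBall.1 hzc⟩
  refine ⟨U₁, hU₁closed, hfrontier, ?_⟩
  intro ε hεc hε
  have hε' : ∀ x, 0 ≤ ε x ∧ ε x ≤ ε₁ x := fun x => ⟨(hε x).1.le, (hε x).2⟩
  constructor
  · -- (i)
    intro φ I hmax h0
    obtain ⟨hI, hsol⟩ := L9.maximal_global hmax
    subst hI
    obtain ⟨zc, hzcZ, hdist⟩ := hU₁mem (φ 0) h0
    have hzcl : zc ∈ closure K := by
      rw [hZdef, frontier_eq_closure_inter_closure] at hzcZ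
      exact hzcZ.1
    obtain ⟨z', hz'K, hz'd⟩ := Metric.mem_closure_iff.1 hzcl (ρf zc / 2) (by linarith [hρf zc])
    have hsolσ : IsSolution F ε (Icc 0 (σf zc)) φ :=
      L9.isSolution_mono hsol (fun t ht => ht.1)
    have hball := (hprop zc ε hε').1 φ hsolσ
      (by linarith [hρr zc, hrf zc, hdist])
      ⟨z', hz'K, by
        calc dist (φ 0) z' ≤ dist (φ 0) zc + dist zc z' := dist_triangle _ _ _
          _ ≤ 2 * ρf zc := by linarith [hρf zc]⟩
    refine ⟨σf zc, le_of_lt (hσf zc), ?_⟩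
    exact mem_interior.2 ⟨Metric.ball (φ (σf zc)) (ρf zc),
      fun y hy => hball (Metric.ball_subset_closedBall hy), Metric.isOpen_ball,
      Metric.mem_ball_self (hρf zc)⟩
  · -- (ii)
    intro φ I hmax h0
    obtain ⟨hI, hsol⟩ := L9.maximal_global hmax
    subst hI
    by_contra hcon
    push_neg at hcon
    have hclosK : ∀ t ∈ Ici (0:ℝ), φ t ∈ closure K := by
      intro t ht
      have := hcon t ht
      rw [interior_compl] at this
      simpa using this
    obtain ⟨zc, hzcZ, hdist⟩ := hU₁mem (φ 0) h0
    have hsolσ : IsSolution (fun x => -F x) ε (Icc 0 (σf zc)) φ :=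
      L9.isSolution_mono hsol (fun t ht => ht.1)
    have hend : dist (φ (σf zc)) zc ≤ rf zc / 4 := by
      have := (hprop zc ε hε').2 φ hsolσ (by linarith [hρr zc, hrf zc, hdist])
      have h1 := hρr zc
      have h2 := hrf zc
      linarith
    have hψsol : IsSolution F ε (Icc 0 (σf zc)) (fun u => φ (σf zc - u)) :=
      L9.reverse_sol (hσf zc).le hsolσ
    have hψ0cl : φ (σf zc) ∈ closure K := hclosK (σf zc) (hσf zc).le
    obtain ⟨z', hz'K, hz'd⟩ := Metric.mem_closure_iff.1 hψ0cl (ρf zc) (hρf zc)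
    have hball := (hprop zc ε hε').1 (fun u => φ (σf zc - u)) hψsol
      (by simpa using hend)
      ⟨z', hz'K, by simpa using (by linarith [hz'd, hρf zc] : dist (φ (σf zc)) z' ≤ 2 * ρf zc)⟩
    have hx'ball : Metric.closedBall (φ 0) (ρf zc) ⊆ K := by
      have : (fun u => φ (σf zc - u)) (σf zc) = φ 0 := by simp
      rwa [sub_self] at hball
    have hzc2 : zc ∈ closure Kᶜ := by
      rw [hZdef, frontier_eq_closure_inter_closure] at hzcZ
      exact hzcZ.2
    obtain ⟨w, hwKc, hwd⟩ := Metric.mem_closure_iff.1 hzc2 (ρf zc / 2) (by linarith [hρf zc])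
    have hwK : w ∈ K := hx'ball (by
      rw [Metric.mem_closedBall]
      calc dist w (φ 0) ≤ dist w zc + dist zc (φ 0) := dist_triangle _ _ _
        _ ≤ ρf zc := by
            rw [dist_comm w zc, dist_comm zc (φ 0)] at *
            linarith [hwd, hdist])
    exact hwKc hwK
end
end

section
/- (Lemma 10, item 1: separation of the closed unsafe set from the closed reachable set) Assume Σ : ẋ ∈ F(x) is forward complete, F is continuous with nonempty compact convex values, and Σ is robustly safe with respect to (X_o, X_u) with robust-safety margin ε̄_o. If closure X_o ∩ closure X_u = ∅, then for every continuous ε̄ : E → ℝ with 0 < ε̄(x) < ε̄_o(x) for all x, the reachable set K_ε̄ satisfies closure X_u ∩ closure K_ε̄ = ∅. -/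
open MeasureTheory Set Pointwise Topology

noncomputable section

/-- Auxiliary: a continuous set-valued map with compact values is bounded on compact sets. -/
lemma F_bound {n : ℕ} {F : Euc n → Set (Euc n)} (hUSC : USC F) (hVal : NCCValues F)
    {Q : Set (Euc n)} (hQ : IsCompact Q) : ∃ M : ℝ, ∀ x ∈ Q, ∀ v ∈ F x, ‖v‖ ≤ M := by
  have key : ∀ p : Euc n, ∃ δ > (0:ℝ), ∃ Mp : ℝ, ∀ x, ‖x - p‖ < δ → ∀ v ∈ F x, ‖v‖ ≤ Mp := by
    intro p
    obtain ⟨δ, hδ, hsub⟩ := hUSC p 1 one_pos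
    obtain ⟨Mp, hMp⟩ := (hVal p).2.1.isBounded.exists_norm_le
    refine ⟨δ, hδ, Mp + 1, fun x hx v hv => ?_⟩
    obtain ⟨w, hw, hnorm⟩ := hsub x hx hv
    calc ‖v‖ ≤ ‖w‖ + ‖v - w‖ := by
          simpa using norm_add_le w (v - w)
      _ ≤ Mp + 1 := add_le_add (hMp w hw) hnorm
  choose δ hδ M hM using key
  obtain ⟨t, -, hcov⟩ := hQ.elim_nhds_subcover (fun p => Metric.ball p (δ p))
    (fun p _ => Metric.ball_mem_nhds p (hδ p))
  obtain ⟨C, hC⟩ := ((t.finite_toSet.image M).bddAbove)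
  refine ⟨C, fun x hx v hv => ?_⟩
  obtain ⟨p, hp, hxp⟩ := by simpa using hcov hx
  have : ‖x - p‖ < δ p := by
    rw [← dist_eq_norm]; simpa [Metric.mem_ball, dist_comm] using hxp
  exact (hM p x this v hv).trans (hC ⟨p, by simpa using hp, rfl⟩)

/-- Auxiliary: uniform lower semicontinuity of `F` on a compact set. -/
lemma F_uniform_lsc {n : ℕ} {F : Euc n → Set (Euc n)} (hUSC : USC F) (hLSC : LSC F)
    (hVal : NCCValues F) {Q : Set (Euc n)} (hQ : IsCompact Q) {r : ℝ} (hr : 0 < r) :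
    ∃ δ > (0:ℝ), ∀ x ∈ Q, ∀ v ∈ F x, ∀ x' : Euc n, ‖x' - x‖ < δ →
      ∃ w ∈ F x', ‖w - v‖ ≤ r := by
  have hr4 : 0 < r / 4 := by positivity
  have key : ∀ p : Euc n, ∃ δp > (0:ℝ), ∀ x, ‖x - p‖ < δp → ∀ v ∈ F x,
      ∀ x', ‖x' - p‖ < δp → ∃ w ∈ F x', ‖w - v‖ ≤ r := by
    intro p
    obtain ⟨δ₀, hδ₀, hδ₀p⟩ := hUSC p (r / 4) hr4
    obtain ⟨vs, hvsmem, hvscov⟩ := (hVal p).2.1.elim_nhds_subcover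
      (fun v => Metric.ball v (r / 4)) (fun v _ => Metric.ball_mem_nhds v hr4)
    have hvsne : vs.Nonempty := by
      obtain ⟨v₀, hv₀⟩ := (hVal p).1
      obtain ⟨w, hw, -⟩ := by simpa using hvscov hv₀
      exact ⟨w, hw⟩
    have hvs : ∀ v ∈ vs, ∃ d > (0:ℝ), ∀ y : Euc n, ‖y - p‖ < d →
        ∃ w ∈ F y, ‖w - v‖ ≤ r / 4 := fun v hv => hLSC p v (hvsmem v hv) (r / 4) hr4
    choose! d hd hdp using hvs
    set d₀ := vs.inf' hvsne d with hd₀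
    have hd₀pos : 0 < d₀ := by
      rw [hd₀, Finset.lt_inf'_iff]
      exact fun v hv => hd v hv
    refine ⟨min δ₀ d₀, lt_min hδ₀ hd₀pos, fun x hx v hv x' hx' => ?_⟩
    obtain ⟨v', hv', hvv'⟩ := hδ₀p x (hx.trans_le (min_le_left _ _)) hv
    obtain ⟨vi, hvi, hv'vi⟩ := by simpa using hvscov hv'
    have hvinorm : ‖v' - vi‖ < r / 4 := by
      rw [← dist_eq_norm]; simpa [Metric.mem_ball] using hv'vi
    obtain ⟨w, hw, hwvi⟩ := hdp vi hvi x'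
      ((hx'.trans_le (min_le_right _ _)).trans_le (Finset.inf'_le d hvi))
    refine ⟨w, hw, ?_⟩
    have : ‖w - v‖ ≤ ‖w - vi‖ + ‖vi - v'‖ + ‖v' - v‖ := by
      have := norm_add₃_le (a := w - vi) (b := vi - v') (c := v' - v)
      simpa using this
    have h1 : ‖vi - v'‖ ≤ r / 4 := by
      rw [norm_sub_rev]; exact hvinorm.le
    have h2 : ‖v' - v‖ ≤ r / 4 := by rw [norm_sub_rev]; exact hvv'
    linarith [hwvi, h1, h2]
  choose δp hδp hkey using key
  rcases Q.eq_empty_or_nonempty with hQe | hQne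
  · exact ⟨1, one_pos, by simp [hQe]⟩
  obtain ⟨t, -, hcov⟩ := hQ.elim_nhds_subcover (fun p => Metric.ball p (δp p / 2))
    (fun p _ => Metric.ball_mem_nhds p (by linarith [hδp p]))
  have htne : t.Nonempty := by
    obtain ⟨q, hq⟩ := hQne
    obtain ⟨pp, hpp, -⟩ := by simpa using hcov hq
    exact ⟨pp, hpp⟩
  refine ⟨t.inf' htne (fun p => δp p / 2), ?_, fun x hx v hv x' hx' => ?_⟩
  · show (0:ℝ) < _
    rw [Finset.lt_inf'_iff]; exact fun p _ => by linarith [hδp p]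
  obtain ⟨p, hp, hxp⟩ := by simpa using hcov hx
  have hxp' : ‖x - p‖ < δp p / 2 := by
    rw [← dist_eq_norm]; simpa [Metric.mem_ball] using hxp
  have hx'p : ‖x' - p‖ < δp p := by
    have h3 : ‖x' - x‖ < δp p / 2 := hx'.trans_le ((Finset.inf'_le _ hp))
    calc ‖x' - p‖ ≤ ‖x' - x‖ + ‖x - p‖ := by simpa using norm_add_le (x' - x) (x - p)
      _ < δp p := by linarith
  exact hkey p x (by linarith [hδp p]) v hv x' hx'p

/-- Auxiliary: interval integral of an indicator of `Ioi a` of a constant. -/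
lemma indicator_integral_le {n : ℕ} (a t₀ t' : ℝ) (c : Euc n) (h : t₀ ≤ t') :
    ∫ s in t₀..t', (Set.Ioi a).indicator (fun _ => c) s =
      (max (t' - a) 0 - max (t₀ - a) 0) • c := by
  rw [intervalIntegral.integral_of_le h, setIntegral_indicator measurableSet_Ioi,
    Ioc_inter_Ioi, setIntegral_const, measureReal_def, Real.volume_Ioc]
  congr 1
  rw [ENNReal.toReal_ofReal']
  rcases le_total a t₀ with h1 | h1
  · rw [sup_eq_left.2 h1, max_eq_left (by linarith : (0:ℝ) ≤ t' - a),
      max_eq_left (by linarith : (0:ℝ) ≤ t₀ - a), max_eq_left (by linarith : (0:ℝ) ≤ t' - t₀)]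
    ring
  · rw [sup_eq_right.2 h1, max_eq_right (by linarith : t₀ - a ≤ 0)]
    rcases le_total a t' with h2 | h2
    · rw [max_eq_left (by linarith : (0:ℝ) ≤ t' - a)]; ring
    · rw [max_eq_right (by linarith : t' - a ≤ 0)]; ring

lemma indicator_integral {n : ℕ} (a t₀ t' : ℝ) (c : Euc n) :
    ∫ s in t₀..t', (Set.Ioi a).indicator (fun _ => c) s =
      (max (t' - a) 0 - max (t₀ - a) 0) • c := by
  rcases le_total t₀ t' with h | h
  · exact indicator_integral_le a t₀ t' c h
  · rw [intervalIntegral.integral_symm, indicator_integral_le a t' t₀ c h]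
    rw [← neg_smul]; ring_nf

lemma indicator_locInt {n : ℕ} (a : ℝ) (c : Euc n) :
    LocallyIntegrable ((Set.Ioi a).indicator (fun _ => c)) volume := by
  rw [locallyIntegrable_iff]
  intro k hk
  exact (integrableOn_const hk.measure_lt_top.ne).indicator measurableSet_Ioi

/-- Auxiliary: solutions are continuous on their (compact) domain. -/
lemma sol_continuousOn {n : ℕ} {g : ℝ → Euc n} (hg : LocallyIntegrable g volume) {a b : ℝ}
    (hab : a ≤ b) {φ : ℝ → Euc n}
    (hφ : ∀ t₀ ∈ Icc a b, ∀ t ∈ Icc a b, φ t = φ t₀ + ∫ s in t₀..t, g s) :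
    ContinuousOn φ (Icc a b) := by
  have hint : IntegrableOn g (Icc a b) volume := hg.integrableOn_isCompact isCompact_Icc
  have h1 : ContinuousOn (fun t => φ a + ∫ s in Ioc a t, g s) (Icc a b) :=
    continuousOn_const.add (intervalIntegral.continuousOn_primitive hint)
  refine h1.congr fun t ht => ?_
  rw [hφ a ⟨le_rfl, hab⟩ t ht, intervalIntegral.integral_of_le ht.1]

set_option maxHeartbeats 2000000 in
/-- Lemma 10, item 1: separation of the closed unsafe set from the closed
reachable set. -/
theorem lemma10_separation_closed {n : ℕ} (hn : 1 ≤ n)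
    (F : Euc n → Set (Euc n)) (Xo Xu : Set (Euc n))
    (hFC : ForwardComplete F) (hUSC : USC F) (hLSC : LSC F) (hVal : NCCValues F)
    (εbaro : Euc n → ℝ) (hεbaro : Continuous εbaro) (hεbaropos : ∀ x, 0 < εbaro x)
    (hsafe : SafeWrt F εbaro Xo Xu)
    (hsep : closure Xo ∩ closure Xu = ∅) :
    ∀ εbar : Euc n → ℝ, Continuous εbar → (∀ x, 0 < εbar x ∧ εbar x < εbaro x) →
      closure Xu ∩ closure (Reach F εbar Xo) = ∅ := by
  intro εbar hεbarc hεbarlt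
  by_contra hne
  obtain ⟨y, hyXu, hyK⟩ := Set.nonempty_iff_ne_empty.mpr hne
  have hynXo : y ∉ closure Xo := by
    intro h
    have hmem : y ∈ closure Xo ∩ closure Xu := ⟨h, hyXu⟩
    rw [hsep] at hmem
    exact hmem
  obtain ⟨ρ, hρpos, hρball⟩ := Metric.isOpen_iff.1 isClosed_closure.isOpen_compl y hynXo
  set r₀ : ℝ := min ρ 1 / 2 with hr₀def
  have hminpos : 0 < min ρ 1 := lt_min hρpos one_pos
  have hr₀pos : 0 < r₀ := by rw [hr₀def]; linarith
  have hr₀ρ : r₀ < ρ := by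
    have h1 := min_le_left ρ 1
    rw [hr₀def]; linarith
  have hr₀1 : r₀ ≤ 1 / 2 := by
    have h1 := min_le_right ρ 1
    rw [hr₀def]; linarith
  set Q := Metric.closedBall y 1 with hQdef
  have hQc : IsCompact Q := isCompact_closedBall y 1
  have hyQ : y ∈ Q := Metric.mem_closedBall_self zero_le_one
  obtain ⟨M₀, hM₀⟩ := F_bound hUSC hVal hQc
  obtain ⟨xE, hxEQ, hxE⟩ := hQc.exists_isMaxOn ⟨y, hyQ⟩ hεbaro.continuousOn
  set E := εbaro xE with hEdef
  set M : ℝ := max (M₀ + E) 1 with hMdef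
  have hM1 : (1:ℝ) ≤ M := le_max_right _ _
  have hMpos : (0:ℝ) < M := lt_of_lt_of_le one_pos hM1
  have hgb : ∀ x ∈ Q, ∀ v ∈ F x, ∀ b : Euc n, ‖b‖ ≤ εbar x → ‖v + b‖ ≤ M := by
    intro x hx v hv b hb
    have h1 : ‖v‖ ≤ M₀ := hM₀ x hx v hv
    have h2 : εbar x ≤ E := le_trans (le_of_lt (hεbarlt x).2) (hxE hx)
    calc ‖v + b‖ ≤ ‖v‖ + ‖b‖ := norm_add_le _ _
      _ ≤ M₀ + E := by linarith
      _ ≤ M := le_max_left _ _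
  obtain ⟨xc, hxcQ, hxc⟩ := hQc.exists_isMinOn ⟨y, hyQ⟩
    ((hεbaro.sub hεbarc).continuousOn (s := Q))
  set c : ℝ := εbaro xc - εbar xc with hcdef
  have hcpos : 0 < c := sub_pos.2 (hεbarlt xc).2
  have hslack : ∀ x ∈ Q, εbar x + c ≤ εbaro x := by
    intro x hx
    have h1 : εbaro xc - εbar xc ≤ εbaro x - εbar x := hxc hx
    rw [hcdef]; linarith
  have hUC := hQc.uniformContinuousOn_of_continuous hεbaro.continuousOn
  rw [Metric.uniformContinuousOn_iff] at hUC
  obtain ⟨δ₁, hδ₁pos, hδ₁⟩ := hUC (c / 3) (by positivity)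
  obtain ⟨δ₂, hδ₂pos, hδ₂⟩ := F_uniform_lsc hUSC hLSC hVal hQc (show (0:ℝ) < c / 3 by positivity)
  set σ : ℝ := r₀ / (2 * M) with hσdef
  have hσpos : 0 < σ := by rw [hσdef]; positivity
  have hMσ : M * σ = r₀ / 2 := by
    rw [hσdef]; field_simp
  have hσr₀ : σ ≤ r₀ / 2 := by
    calc σ = 1 * σ := (one_mul σ).symm
      _ ≤ M * σ := mul_le_mul_of_nonneg_right hM1 hσpos.le
      _ = r₀ / 2 := hMσ
  set d : ℝ := min (min δ₁ δ₂) (min (σ * (c / 3)) (r₀ / 4)) / 2 with hddef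
  have hminb : 0 < min (min δ₁ δ₂) (min (σ * (c / 3)) (r₀ / 4)) :=
    lt_min (lt_min hδ₁pos hδ₂pos) (lt_min (by positivity) (by positivity))
  have hdpos : 0 < d := by rw [hddef]; linarith
  have hdδ₁ : d ≤ δ₁ := by
    have h1 := min_le_left (min δ₁ δ₂) (min (σ * (c / 3)) (r₀ / 4))
    have h2 := min_le_left δ₁ δ₂
    rw [hddef]; linarith
  have hdδ₂ : d ≤ δ₂ := by
    have h1 := min_le_left (min δ₁ δ₂) (min (σ * (c / 3)) (r₀ / 4))
    have h2 := min_le_right δ₁ δ₂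
    rw [hddef]; linarith
  have hdσc : d ≤ σ * (c / 3) := by
    have h1 := min_le_right (min δ₁ δ₂) (min (σ * (c / 3)) (r₀ / 4))
    have h2 := min_le_left (σ * (c / 3)) (r₀ / 4)
    rw [hddef]; linarith
  have hdr₀ : d ≤ r₀ / 4 := by
    have h1 := min_le_right (min δ₁ δ₂) (min (σ * (c / 3)) (r₀ / 4))
    have h2 := min_le_right (σ * (c / 3)) (r₀ / 4)
    rw [hddef]; linarith
  obtain ⟨z, hzK, hyz⟩ := Metric.mem_closure_iff.1 hyK (d / 2) (by linarith)
  obtain ⟨u, huXu, hyu⟩ := Metric.mem_closure_iff.1 hyXu (d / 2) (by linarith)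
  have huz : ‖u - z‖ < d := by
    have h1 : dist u z ≤ dist u y + dist y z := dist_triangle u y z
    rw [← dist_eq_norm]
    rw [dist_comm] at hyu
    linarith
  obtain ⟨t, ht0, φ, hφsol, hφ0, hφt⟩ := hzK
  obtain ⟨g, hgloc, hgint, hgae⟩ := hφsol
  have hφcont : ContinuousOn φ (Icc 0 t) := sol_continuousOn hgloc ht0 hgint
  set l : ℝ := max (t - σ) 0 with hldef
  have hl0 : 0 ≤ l := le_max_right _ _
  have hlt : l ≤ t := max_le (by linarith) ht0
  have hltσ : t - σ ≤ l := le_max_left _ _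
  have hzy : ‖φ t - y‖ < d := by
    rw [hφt, ← dist_eq_norm, dist_comm]; linarith
  have claim : ∀ s ∈ Icc l t, ‖φ s - y‖ ≤ r₀ := by
    by_contra hcon
    push_neg at hcon
    obtain ⟨s₀, hs₀mem, hs₀⟩ := hcon
    set B : Set ℝ := Icc s₀ t ∩ (fun s => ‖φ s - y‖) ⁻¹' (Ici r₀) with hBdef
    have hs₀0 : 0 ≤ s₀ := le_trans hl0 hs₀mem.1
    have hsubI : Icc s₀ t ⊆ Icc 0 t := Icc_subset_Icc hs₀0 le_rfl
    have hcont' : ContinuousOn (fun s => ‖φ s - y‖) (Icc s₀ t) :=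
      ((hφcont.mono hsubI).sub continuousOn_const).norm
    have hBclosed : IsClosed B :=
      hcont'.preimage_isClosed_of_isClosed isClosed_Icc isClosed_Ici
    have hBcomp : IsCompact B :=
      isCompact_Icc.of_isClosed_subset hBclosed inter_subset_left
    have hBne : B.Nonempty := ⟨s₀, ⟨le_rfl, hs₀mem.2⟩, hs₀.le⟩
    set s₁ := sSup B with hs₁def
    have hs₁B : s₁ ∈ B := hBcomp.sSup_mem hBne
    have hs₁I : s₁ ∈ Icc s₀ t := hs₁B.1
    have hs₁t : s₁ ≤ t := hs₁I.2
    have hs₁0 : 0 ≤ s₁ := le_trans hs₀0 hs₁I.1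
    have hafter : ∀ s, s₁ < s → s ≤ t → ‖φ s - y‖ < r₀ := by
      intro s hs hst
      by_contra hge
      push_neg at hge
      have hsB : s ∈ B := ⟨⟨le_trans hs₁I.1 hs.le, hst⟩, hge⟩
      exact absurd (le_csSup hBcomp.bddAbove hsB) (not_le.2 hs)
    have hgbd : ∀ᵐ s ∂(volume : Measure ℝ), s ∈ Set.uIoc s₁ t → ‖g s‖ ≤ M := by
      filter_upwards [hgae] with s hs hmem
      rw [Set.uIoc_of_le hs₁t] at hmem
      have hsI : s ∈ Icc 0 t := ⟨le_trans hs₁0 hmem.1.le, hmem.2⟩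
      obtain ⟨w, hw, b, hb, hwb⟩ := Set.mem_add.1 (hs hsI)
      have hφsQ : φ s ∈ Q := by
        rw [hQdef, Metric.mem_closedBall, dist_eq_norm]
        exact le_trans (hafter s hmem.1 hmem.2).le (by linarith)
      rw [← hwb]
      exact hgb (φ s) hφsQ w hw b (mem_closedBall_zero_iff.1 hb)
    have hint1 : φ t = φ s₁ + ∫ s in s₁..t, g s := hgint s₁ ⟨hs₁0, hs₁t⟩ t ⟨ht0, le_rfl⟩
    have hnorm : ‖φ t - φ s₁‖ ≤ M * |t - s₁| := by
      rw [hint1]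
      simp only [add_sub_cancel_left]
      exact intervalIntegral.norm_integral_le_of_norm_le_const_ae hgbd
    have habs : |t - s₁| = t - s₁ := abs_of_nonneg (by linarith)
    have h2 : t - s₁ ≤ σ := by
      have := hs₁I.1
      have := hs₀mem.1
      linarith
    have h3 : ‖φ t - φ s₁‖ ≤ r₀ / 2 := by
      rw [habs] at hnorm
      calc ‖φ t - φ s₁‖ ≤ M * (t - s₁) := hnorm
        _ ≤ M * σ := mul_le_mul_of_nonneg_left h2 hMpos.le
        _ = r₀ / 2 := hMσ
    have h4 : r₀ ≤ ‖φ s₁ - y‖ := hs₁B.2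
    have h5 := dist_triangle (φ s₁) (φ t) y
    rw [dist_eq_norm, dist_eq_norm, dist_eq_norm] at h5
    have h6 : ‖φ s₁ - φ t‖ = ‖φ t - φ s₁‖ := norm_sub_rev _ _
    linarith
  have htσ : σ ≤ t := by
    by_contra hlt'
    push_neg at hlt'
    have hl0' : l = 0 := max_eq_right (by linarith)
    have h0mem : (0:ℝ) ∈ Icc l t := ⟨hl0'.le, ht0⟩
    have hcl := claim 0 h0mem
    have hφ0ball : φ 0 ∈ Metric.ball y ρ := by
      rw [Metric.mem_ball, dist_eq_norm]; linarith
    exact hρball hφ0ball (subset_closure hφ0)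
  have hl' : l = t - σ := max_eq_left (by linarith)
  set c₀ : Euc n := σ⁻¹ • (u - z) with hc₀def
  have hc₀norm : ‖c₀‖ < c / 3 := by
    rw [hc₀def, norm_smul, Real.norm_eq_abs, abs_of_pos (inv_pos.2 hσpos)]
    have h1 : ‖u - z‖ < σ * (c / 3) := lt_of_lt_of_le huz hdσc
    calc σ⁻¹ * ‖u - z‖ < σ⁻¹ * (σ * (c / 3)) :=
          mul_lt_mul_of_pos_left h1 (inv_pos.2 hσpos)
      _ = c / 3 := by field_simp
  set ψ : ℝ → Euc n := fun s => φ s + (max (s - (t - σ)) 0) • c₀ with hψdef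
  set g' : ℝ → Euc n := fun s => g s + (Set.Ioi (t - σ)).indicator (fun _ => c₀) s with hg'def
  have hψ0 : ψ 0 = φ 0 := by
    simp only [hψdef]
    rw [max_eq_right (by linarith : (0:ℝ) - (t - σ) ≤ 0), zero_smul, add_zero]
  have hψt : ψ t = u := by
    simp only [hψdef]
    rw [hφt, max_eq_left (by linarith : (0:ℝ) ≤ t - (t - σ)), hc₀def, smul_smul]
    have hts : t - (t - σ) = σ := by ring
    rw [hts, mul_inv_cancel₀ (ne_of_gt hσpos), one_smul]
    abel
  have hII : ∀ (f : ℝ → Euc n), LocallyIntegrable f volume →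
      ∀ a b : ℝ, IntervalIntegrable f volume a b :=
    fun f hf a b => (hf.integrableOn_isCompact isCompact_uIcc).intervalIntegrable
  have hψsol : IsSolution F εbaro (Icc 0 t) ψ := by
    refine ⟨g', hgloc.add (indicator_locInt _ _), ?_, ?_⟩
    · intro t₀ ht₀ t' ht'
      simp only [hψdef, hg'def]
      rw [intervalIntegral.integral_add (hII g hgloc t₀ t') (hII _ (indicator_locInt _ _) t₀ t'),
        indicator_integral, hgint t₀ ht₀ t' ht', sub_smul]
      abel
    · filter_upwards [hgae] with s hs hmem
      have hFmem := hs hmem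
      rcases le_or_gt s (t - σ) with hcase | hcase
      · have hψs : ψ s = φ s := by
          simp only [hψdef]
          rw [max_eq_right (by linarith), zero_smul, add_zero]
        have hg's : g' s = g s := by
          simp only [hg'def]
          rw [Set.indicator_of_notMem (by simpa using not_lt.2 hcase), add_zero]
        rw [hψs, hg's]
        refine Set.add_subset_add_left ?_ hFmem
        exact Metric.closedBall_subset_closedBall (le_of_lt (hεbarlt (φ s)).2)
      · have hsl : s ∈ Icc l t := ⟨by rw [hl']; linarith, hmem.2⟩
        have hφsr : ‖φ s - y‖ ≤ r₀ := claim s hsl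
        have hφsQ : φ s ∈ Q := by
          rw [hQdef, Metric.mem_closedBall, dist_eq_norm]; linarith
        set lam : ℝ := max (s - (t - σ)) 0 with hlamdef
        have hlam1 : lam = s - (t - σ) := max_eq_left (by linarith)
        have hlampos : 0 < lam := by rw [hlam1]; linarith
        have hlamσ : lam ≤ σ := by
          have := hmem.2
          rw [hlam1]; linarith
        have hdiff : ψ s - φ s = lam • c₀ := by
          simp only [hψdef, hlamdef]; abel
        have hdiffnorm : ‖ψ s - φ s‖ ≤ ‖u - z‖ := by
          rw [hdiff, hc₀def, norm_smul, norm_smul, Real.norm_eq_abs, Real.norm_eq_abs,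
            abs_of_pos hlampos, abs_of_pos (inv_pos.2 hσpos)]
          calc lam * (σ⁻¹ * ‖u - z‖) ≤ σ * (σ⁻¹ * ‖u - z‖) :=
                mul_le_mul_of_nonneg_right hlamσ (by positivity)
            _ = ‖u - z‖ := by field_simp
        have hdn : ‖ψ s - φ s‖ < d := lt_of_le_of_lt hdiffnorm huz
        have hψsQ : ψ s ∈ Q := by
          rw [hQdef, Metric.mem_closedBall, dist_eq_norm]
          have h7 : ‖ψ s - y‖ ≤ ‖ψ s - φ s‖ + ‖φ s - y‖ := by
            simpa using norm_add_le (ψ s - φ s) (φ s - y)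
          linarith
        obtain ⟨w, hw, b, hb, hwb⟩ := Set.mem_add.1 hFmem
        obtain ⟨w', hw', hww'⟩ := hδ₂ (φ s) hφsQ w hw (ψ s) (lt_of_lt_of_le hdn hdδ₂)
        have hεψ : εbaro (φ s) ≤ εbaro (ψ s) + c / 3 := by
          have hdist : dist (ψ s) (φ s) < δ₁ := by
            rw [dist_eq_norm]; exact lt_of_lt_of_le hdn hdδ₁
          have h8 := hδ₁ (ψ s) hψsQ (φ s) hφsQ hdist
          rw [Real.dist_eq] at h8
          have h9 := abs_sub_lt_iff.1 h8
          linarith [h9.2]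
        have hg's : g' s = g s + c₀ := by
          simp only [hg'def]
          rw [Set.indicator_of_mem (Set.mem_Ioi.2 hcase)]
        have hslack' := hslack (φ s) hφsQ
        have hbn : ‖b‖ ≤ εbar (φ s) := mem_closedBall_zero_iff.1 hb
        refine Set.mem_add.2 ⟨w', hw', g' s - w', ?_, by abel⟩
        rw [mem_closedBall_zero_iff]
        have hrem : g' s - w' = (w - w') + b + c₀ := by
          rw [hg's, ← hwb]; abel
        rw [hrem]
        have hN : ‖(w - w') + b + c₀‖ ≤ ‖w - w'‖ + ‖b‖ + ‖c₀‖ := norm_add₃_le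
        have hww'' : ‖w - w'‖ ≤ c / 3 := by rw [norm_sub_rev]; exact hww'
        linarith
  have hfinal := hsafe 0 t ψ le_rfl ht0 hψsol (by rw [hψ0]; exact hφ0) t ⟨ht0, le_rfl⟩
  rw [hψt] at hfinal
  exact hfinal huXu
end
end
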